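/- arXiv:2403.13878 — 11 statements merged into one kernel-verified Lean document; each statement's English description precedes it below -/
import Mathlib

section
/- For all nonnegative integers n, the sum over p from 0 to n of binom(n, p) * (2p-1)!! * (2(n-p)-1)!! equals (2n)!! = 2^n * n!. -/
open Finset

private lemma aux_succ (n : ℕ) :
    ∑ p ∈ range (n + 2),
        Nat.choose (n + 1) p * Nat.doubleFactorial (2 * p - 1) *
          Nat.doubleFactorial (2 * (n + 1 - p) - 1)
      = (2 * n + 2) *
        ∑ p ∈ range (n + 1),
          Nat.choose n p * Nat.doubleFactorial (2 * p - 1) *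
            Nat.doubleFactorial (2 * (n - p) - 1) := by
  have hdf : ∀ m : ℕ, Nat.doubleFactorial (2 * m + 1)
      = (2 * m + 1) * Nat.doubleFactorial (2 * m - 1) := fun m => by
    simpa using Nat.doubleFactorial_add_one (2 * m)
  rw [Finset.sum_range_succ']
  have h1 : ∀ p ∈ range (n + 1),
      Nat.choose (n + 1) (p + 1) * Nat.doubleFactorial (2 * (p + 1) - 1) *
        Nat.doubleFactorial (2 * (n + 1 - (p + 1)) - 1)
      = Nat.choose n p * ((2 * p + 1) * (Nat.doubleFactorial (2 * p - 1) *
            Nat.doubleFactorial (2 * (n - p) - 1)))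
        + Nat.choose n (p + 1) * Nat.doubleFactorial (2 * (p + 1) - 1) *
          Nat.doubleFactorial (2 * (n + 1 - (p + 1)) - 1) := by
    intro p hp
    have hs : n + 1 - (p + 1) = n - p := by omega
    have hd : 2 * (p + 1) - 1 = 2 * p + 1 := by omega
    rw [hs, hd, hdf, Nat.choose_succ_succ]
    ring
  rw [Finset.sum_congr rfl h1, Finset.sum_add_distrib, add_assoc]
  have h2 : (∑ p ∈ range (n + 1),
          Nat.choose n (p + 1) * Nat.doubleFactorial (2 * (p + 1) - 1) *
            Nat.doubleFactorial (2 * (n + 1 - (p + 1)) - 1))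
      + Nat.choose (n + 1) 0 * Nat.doubleFactorial (2 * 0 - 1) *
          Nat.doubleFactorial (2 * (n + 1 - 0) - 1)
      = ∑ p ∈ range (n + 1),
          Nat.choose n p * ((2 * (n - p) + 1) * (Nat.doubleFactorial (2 * p - 1) *
            Nat.doubleFactorial (2 * (n - p) - 1))) := by
    have e0 : Nat.choose (n + 1) 0 * Nat.doubleFactorial (2 * 0 - 1) *
          Nat.doubleFactorial (2 * (n + 1 - 0) - 1)
        = Nat.choose n 0 * Nat.doubleFactorial (2 * 0 - 1) *
          Nat.doubleFactorial (2 * (n + 1 - 0) - 1) := by simp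
    rw [e0, ← Finset.sum_range_succ' (fun p => Nat.choose n p *
      Nat.doubleFactorial (2 * p - 1) * Nat.doubleFactorial (2 * (n + 1 - p) - 1)) (n + 1),
      Finset.sum_range_succ]
    simp only [Nat.choose_succ_self, Nat.zero_mul, Nat.mul_zero, zero_mul, add_zero]
    refine Finset.sum_congr rfl fun p hp => ?_
    rw [Finset.mem_range] at hp
    have hs : 2 * (n + 1 - p) - 1 = 2 * (n - p) + 1 := by omega
    rw [hs, hdf]
    ring
  rw [h2, ← Finset.sum_add_distrib, Finset.mul_sum]
  refine Finset.sum_congr rfl fun p hp => ?_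
  rw [Finset.mem_range] at hp
  have hc : (2 * p + 1) + (2 * (n - p) + 1) = 2 * n + 2 := by omega
  rw [← mul_add, ← add_mul, hc]
  ring

theorem stmt1 (n : ℕ) :
    ∑ p ∈ range (n + 1),
        Nat.choose n p * Nat.doubleFactorial (2 * p - 1) *
          Nat.doubleFactorial (2 * (n - p) - 1)
      = 2 ^ n * n.factorial := by
  induction n with
  | zero => simp
  | succ n ih =>
      rw [aux_succ, ih, Nat.factorial_succ]
      ring
end

section
/- For all nonnegative integers n, the sum over p from 0 to n of p*(p-1) * binom(2p, p) * binom(2n-2p, n-p) equals 12 * n * (n-1) * 2^{2n-5}, i.e., equals (3/8) * n * (n-1) * 4^n. -/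
open Finset

private def aa (p : ℕ) : ℚ := Nat.choose (2 * p) p

private def TT (n p : ℕ) : ℚ := aa p * aa (n - p)

private lemma aa_rec (q : ℕ) : ((q : ℚ) + 1) * aa (q + 1) = (4 * q + 2) * aa q := by
  have h := Nat.succ_mul_centralBinom_succ q
  have h' : ((q + 1) * Nat.centralBinom (q + 1) : ℚ) = (2 * (2 * q + 1) * Nat.centralBinom q : ℚ) := by
    exact_mod_cast congrArg (Nat.cast : ℕ → ℚ) h
  unfold aa
  unfold Nat.centralBinom at h'
  linarith

private lemma TT_shift (n q : ℕ) : ((q : ℚ) + 1) * TT (n + 1) (q + 1) = (4 * q + 2) * TT n q := by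
  unfold TT
  rw [Nat.succ_sub_succ]
  have h := aa_rec q
  calc ((q : ℚ) + 1) * (aa (q + 1) * aa (n - q))
      = (((q : ℚ) + 1) * aa (q + 1)) * aa (n - q) := by ring
    _ = ((4 * (q : ℚ) + 2) * aa q) * aa (n - q) := by rw [h]
    _ = (4 * (q : ℚ) + 2) * (aa q * aa (n - q)) := by ring

private lemma sum_reflect (n : ℕ) (f : ℕ → ℚ) :
    ∑ p ∈ range (n + 1), f (n - p) * TT n p = ∑ p ∈ range (n + 1), f p * TT n p := by
  rw [← Finset.sum_range_reflect (fun p => f p * TT n p) (n + 1)]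
  apply Finset.sum_congr rfl
  intro p hp
  have hp' : p ≤ n := Nat.lt_succ_iff.mp (mem_range.mp hp)
  have h1 : n + 1 - 1 - p = n - p := by omega
  have h2 : n - (n - p) = p := by omega
  rw [h1]
  unfold TT
  rw [h2]
  ring

private lemma s1_half (n : ℕ) :
    2 * ∑ p ∈ range (n + 1), (p : ℚ) * TT n p = n * ∑ p ∈ range (n + 1), TT n p := by
  have hr := sum_reflect n (fun p => (p : ℚ))
  have hl : ∑ p ∈ range (n + 1), ((n - p : ℕ) : ℚ) * TT n p
      = ∑ p ∈ range (n + 1), ((n : ℚ) - p) * TT n p := by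
    apply Finset.sum_congr rfl
    intro p hp
    have hp' : p ≤ n := Nat.lt_succ_iff.mp (mem_range.mp hp)
    rw [Nat.cast_sub hp']
  rw [hl] at hr
  have hs : ∑ p ∈ range (n + 1), ((n : ℚ) - p) * TT n p
      = n * ∑ p ∈ range (n + 1), TT n p - ∑ p ∈ range (n + 1), (p : ℚ) * TT n p := by
    rw [Finset.mul_sum, ← Finset.sum_sub_distrib]
    apply Finset.sum_congr rfl
    intros; ring
  rw [hs] at hr
  linarith

private lemma conv_eq (n : ℕ) : ∑ p ∈ range (n + 1), TT n p = 4 ^ n := by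
  induction n with
  | zero => simp [TT, aa]
  | succ n ih =>
    have hS1 : ∑ p ∈ range (n + 1), (p : ℚ) * TT n p = n * 4 ^ n / 2 := by
      have := s1_half n
      rw [ih] at this
      linarith
    have hshift : ∑ p ∈ range (n + 2), (p : ℚ) * TT (n + 1) p
        = ∑ q ∈ range (n + 1), (4 * (q : ℚ) + 2) * TT n q := by
      rw [Finset.sum_range_succ' (fun p => (p : ℚ) * TT (n + 1) p) (n + 1)]
      simp only [Nat.cast_zero, zero_mul, add_zero]
      apply Finset.sum_congr rfl
      intro q _
      push_cast
      rw [show ((q : ℚ) + 1) * TT (n + 1) (q + 1) = (4 * q + 2) * TT n q from TT_shift n q]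
    have hval : ∑ p ∈ range (n + 2), (p : ℚ) * TT (n + 1) p = (2 * n + 2) * 4 ^ n := by
      rw [hshift]
      have : ∑ q ∈ range (n + 1), (4 * (q : ℚ) + 2) * TT n q
          = 4 * ∑ q ∈ range (n + 1), (q : ℚ) * TT n q + 2 * ∑ q ∈ range (n + 1), TT n q := by
        rw [Finset.mul_sum, Finset.mul_sum, ← Finset.sum_add_distrib]
        apply Finset.sum_congr rfl
        intros; ring
      rw [this, hS1, ih]; ring
    have hhalf := s1_half (n + 1)
    rw [hval] at hhalf
    have hn : ((n : ℚ) + 1) ≠ 0 := by positivity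
    have : ((n : ℚ) + 1) * ∑ p ∈ range (n + 2), TT (n + 1) p = ((n : ℚ) + 1) * 4 ^ (n + 1) := by
      push_cast at hhalf
      ring_nf at hhalf ⊢
      linarith
    exact mul_left_cancel₀ hn this

private lemma s1_eq (n : ℕ) : ∑ p ∈ range (n + 1), (p : ℚ) * TT n p = n * 4 ^ n / 2 := by
  have := s1_half n
  rw [conv_eq n] at this
  linarith

private lemma s2_eq (n : ℕ) :
    ∑ p ∈ range (n + 1), (p : ℚ) * ((p : ℚ) - 1) * TT n p = 3 / 8 * n * ((n : ℚ) - 1) * 4 ^ n := by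
  induction n with
  | zero => simp
  | succ n ih =>
    have hshift : ∑ p ∈ range (n + 2), (p : ℚ) * ((p : ℚ) - 1) * TT (n + 1) p
        = ∑ q ∈ range (n + 1), (q : ℚ) * ((4 * (q : ℚ) + 2) * TT n q) := by
      rw [Finset.sum_range_succ' (fun p => (p : ℚ) * ((p : ℚ) - 1) * TT (n + 1) p) (n + 1)]
      simp only [Nat.cast_zero, zero_mul, add_zero]
      apply Finset.sum_congr rfl
      intro q _
      push_cast
      have := TT_shift n q
      have h2 : ((q : ℚ) + 1) * ((q : ℚ) + 1 - 1) * TT (n + 1) (q + 1)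
          = (q : ℚ) * (((q : ℚ) + 1) * TT (n + 1) (q + 1)) := by ring
      rw [h2, this]
    have hsplit : ∑ q ∈ range (n + 1), (q : ℚ) * ((4 * (q : ℚ) + 2) * TT n q)
        = 4 * ∑ q ∈ range (n + 1), (q : ℚ) * ((q : ℚ) - 1) * TT n q
          + 6 * ∑ q ∈ range (n + 1), (q : ℚ) * TT n q := by
      rw [Finset.mul_sum, Finset.mul_sum, ← Finset.sum_add_distrib]
      apply Finset.sum_congr rfl
      intros; ring
    rw [hshift, hsplit, ih, s1_eq n]
    push_cast
    ring

theorem stmt2 (n : ℕ) :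
    (∑ p ∈ range (n + 1),
        (p : ℚ) * ((p : ℚ) - 1) * Nat.choose (2 * p) p * Nat.choose (2 * n - 2 * p) (n - p))
        = 12 * (n : ℚ) * ((n : ℚ) - 1) * (2 : ℚ) ^ (2 * (n : ℤ) - 5) ∧
    (∑ p ∈ range (n + 1),
        (p : ℚ) * ((p : ℚ) - 1) * Nat.choose (2 * p) p * Nat.choose (2 * n - 2 * p) (n - p))
        = 3 / 8 * (n : ℚ) * ((n : ℚ) - 1) * 4 ^ n := by
  have key : (∑ p ∈ range (n + 1),
      (p : ℚ) * ((p : ℚ) - 1) * Nat.choose (2 * p) p * Nat.choose (2 * n - 2 * p) (n - p))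
      = 3 / 8 * (n : ℚ) * ((n : ℚ) - 1) * 4 ^ n := by
    have heq : (∑ p ∈ range (n + 1),
        (p : ℚ) * ((p : ℚ) - 1) * Nat.choose (2 * p) p * Nat.choose (2 * n - 2 * p) (n - p))
        = ∑ p ∈ range (n + 1), (p : ℚ) * ((p : ℚ) - 1) * TT n p := by
      apply Finset.sum_congr rfl
      intro p _
      unfold TT aa
      rw [show 2 * n - 2 * p = 2 * (n - p) from by omega]
      ring
    rw [heq, s2_eq n]
  constructor
  · rw [key]
    have h2 : (2 : ℚ) ^ (2 * (n : ℤ) - 5) = 4 ^ n / 32 := by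
      have h4 : (2 : ℚ) ^ (2 * (n : ℤ)) = 4 ^ n := by
        rw [show (2 * (n : ℤ)) = ((2 * n : ℕ) : ℤ) from by push_cast; ring,
          zpow_natCast, pow_mul]
        norm_num
      rw [zpow_sub₀ (by norm_num : (2 : ℚ) ≠ 0), h4]
      norm_num
    rw [h2]
    ring
  · exact key
end

section
/- For all nonnegative integers n, the sum over p from 0 to n of p*(n-p) * binom(2p, p) * binom(2n-2p, n-p) equals 4 * n * (n-1) * 2^{2n-5}, i.e., equals (1/8) * n * (n-1) * 4^n. -/
open Finset

private def c (p : ℕ) : ℚ := (Nat.choose (2 * p) p : ℚ)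

private lemma c_rec (p : ℕ) : ((p : ℚ) + 1) * c (p + 1) = (4 * p + 2) * c p := by
  have h := Nat.succ_mul_centralBinom_succ p
  unfold Nat.centralBinom at h
  have h' : (((p + 1) * (2 * (p + 1)).choose (p + 1) : ℕ) : ℚ)
      = ((2 * (2 * p + 1) * (2 * p).choose p : ℕ) : ℚ) := by exact_mod_cast h
  push_cast at h'
  unfold c
  linarith [h']

private def S (n : ℕ) : ℚ := ∑ p ∈ range (n + 1), c p * c (n - p)

private def P (n : ℕ) : ℚ := ∑ p ∈ range (n + 1), (p : ℚ) * c p * c (n - p)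

private def Q (n : ℕ) : ℚ := ∑ p ∈ range (n + 1), (p : ℚ)^2 * c p * c (n - p)

private lemma two_P (n : ℕ) : 2 * P n = n * S n := by
  have hrefl : P n = ∑ p ∈ range (n + 1), ((n : ℚ) - p) * c p * c (n - p) := by
    rw [P, ← Finset.sum_range_reflect]
    apply Finset.sum_congr rfl
    intro p hp
    have hp' : p ≤ n := Nat.lt_succ_iff.mp (mem_range.mp hp)
    have h1 : n + 1 - 1 - p = n - p := by omega
    have h2 : n - (n - p) = p := by omega
    rw [h1, h2]
    have : ((n - p : ℕ) : ℚ) = (n : ℚ) - p := by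
      push_cast [hp']; ring
    rw [this]
    ring
  have : P n + P n = ∑ p ∈ range (n + 1), (n : ℚ) * (c p * c (n - p)) := by
    nth_rewrite 2 [hrefl]
    rw [P, ← Finset.sum_add_distrib]
    apply Finset.sum_congr rfl
    intro p _
    ring
  rw [two_mul, this, ← Finset.mul_sum, S]

private lemma S_val (n : ℕ) : S n = 4 ^ n := by
  induction n with
  | zero => simp [S, c]
  | succ n ih =>
    have key : ((n : ℚ) + 1) * S (n + 1) = 2 * ∑ p ∈ range (n + 2), (p : ℚ) * c p * c (n + 1 - p) := by
      have h2 : 2 * P (n + 1) = (n + 1 : ℕ) * S (n + 1) := two_P (n + 1)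
      rw [P] at h2
      push_cast at h2
      linarith [h2]
    have shift : ∑ p ∈ range (n + 2), (p : ℚ) * c p * c (n + 1 - p)
        = ∑ p ∈ range (n + 1), ((p : ℚ) + 1) * c (p + 1) * c (n - p) := by
      rw [Finset.sum_range_succ']
      simp only [Nat.cast_zero, zero_mul, mul_zero, zero_mul, add_zero]
      apply Finset.sum_congr rfl
      intro p _
      have : n + 1 - (p + 1) = n - p := by omega
      rw [this]
      push_cast
      ring
    have step : ∑ p ∈ range (n + 1), ((p : ℚ) + 1) * c (p + 1) * c (n - p)
        = 4 * P n + 2 * S n := by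
      have : ∀ p ∈ range (n + 1), ((p : ℚ) + 1) * c (p + 1) * c (n - p)
          = 4 * ((p : ℚ) * c p * c (n - p)) + 2 * (c p * c (n - p)) := by
        intro p _
        rw [show ((p : ℚ) + 1) * c (p + 1) * c (n - p)
            = (((p : ℚ) + 1) * c (p + 1)) * c (n - p) from by ring, c_rec p]
        ring
      rw [Finset.sum_congr rfl this, Finset.sum_add_distrib, ← Finset.mul_sum, ← Finset.mul_sum]
      rfl
    have hp2 : 2 * P n = n * S n := two_P n
    have : ((n : ℚ) + 1) * S (n + 1) = ((n : ℚ) + 1) * (4 * S n) := by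
      rw [key, shift, step]; linarith
    have hne : ((n : ℚ) + 1) ≠ 0 := by positivity
    have hS : S (n + 1) = 4 * S n := mul_left_cancel₀ hne this
    rw [hS, ih]; ring

private lemma P_val (n : ℕ) : P n = n * 4 ^ n / 2 := by
  have := two_P n
  rw [S_val] at this
  linarith

private lemma Q_val (n : ℕ) : Q n = n * (3 * n + 1) * 4 ^ n / 8 := by
  induction n with
  | zero => simp [Q]
  | succ n ih =>
    have shift : Q (n + 1) = ∑ p ∈ range (n + 1), ((p : ℚ) + 1)^2 * c (p + 1) * c (n - p) := by
      rw [Q, Finset.sum_range_succ']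
      norm_num
      apply Finset.sum_congr rfl
      intro p _
      have : n + 1 - (p + 1) = n - p := by omega
      rw [this]
    have step : ∑ p ∈ range (n + 1), ((p : ℚ) + 1)^2 * c (p + 1) * c (n - p)
        = 4 * Q n + 6 * P n + 2 * S n := by
      have : ∀ p ∈ range (n + 1), ((p : ℚ) + 1)^2 * c (p + 1) * c (n - p)
          = 4 * ((p : ℚ)^2 * c p * c (n - p)) + 6 * ((p : ℚ) * c p * c (n - p))
            + 2 * (c p * c (n - p)) := by
        intro p _
        have h := c_rec p
        have : ((p : ℚ) + 1)^2 * c (p + 1) = ((p : ℚ) + 1) * ((4 * p + 2) * c p) := by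
          rw [← h]; ring
        rw [show ((p : ℚ) + 1)^2 * c (p + 1) * c (n - p) = (((p : ℚ) + 1)^2 * c (p + 1)) * c (n - p) by ring, this]
        ring
      rw [Finset.sum_congr rfl this]
      rw [Finset.sum_add_distrib, Finset.sum_add_distrib, ← Finset.mul_sum, ← Finset.mul_sum, ← Finset.mul_sum]
      rfl
    rw [shift, step, ih, P_val, S_val]
    push_cast
    ring

theorem stmt3 (n : ℕ) :
    (∑ p ∈ range (n + 1),
        (p : ℚ) * ((n : ℚ) - (p : ℚ)) * Nat.choose (2 * p) p * Nat.choose (2 * n - 2 * p) (n - p))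
        = 4 * (n : ℚ) * ((n : ℚ) - 1) * (2 : ℚ) ^ (2 * (n : ℤ) - 5) ∧
    (∑ p ∈ range (n + 1),
        (p : ℚ) * ((n : ℚ) - (p : ℚ)) * Nat.choose (2 * p) p * Nat.choose (2 * n - 2 * p) (n - p))
        = 1 / 8 * (n : ℚ) * ((n : ℚ) - 1) * 4 ^ n := by
  have hsum : (∑ p ∈ range (n + 1),
        (p : ℚ) * ((n : ℚ) - (p : ℚ)) * Nat.choose (2 * p) p * Nat.choose (2 * n - 2 * p) (n - p))
        = n * P n - Q n := by
    rw [P, Q, Finset.mul_sum, ← Finset.sum_sub_distrib]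
    apply Finset.sum_congr rfl
    intro p hp
    have hp' : p ≤ n := Nat.lt_succ_iff.mp (mem_range.mp hp)
    have h1 : 2 * n - 2 * p = 2 * (n - p) := by omega
    rw [h1]
    unfold c
    ring
  have hval : (∑ p ∈ range (n + 1),
        (p : ℚ) * ((n : ℚ) - (p : ℚ)) * Nat.choose (2 * p) p * Nat.choose (2 * n - 2 * p) (n - p))
        = n * (n - 1) * 4 ^ n / 8 := by
    rw [hsum, P_val, Q_val]
    ring
  constructor
  · rw [hval]
    have h2 : (2 : ℚ) ^ (2 * (n : ℤ) - 5) = (2 : ℚ) ^ (2 * (n : ℤ)) / 2 ^ (5 : ℤ) := by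
      rw [← zpow_sub₀ (by norm_num : (2:ℚ) ≠ 0)]
    rw [h2]
    have h3 : (2 : ℚ) ^ (2 * (n : ℤ)) = 4 ^ n := by
      rw [show (2 : ℤ) * (n : ℤ) = ((2 * n : ℕ) : ℤ) by push_cast; ring, zpow_natCast,
        pow_mul]
      norm_num
    rw [h3]
    norm_num
    ring
  · rw [hval]; ring
end

section
/- For all nonnegative integers n, the sum over p from 0 to n of (n-p) * binom(2p, p) * binom(2n-2p, n-p) equals n * 2^{2n-1}. -/
open Finset

private def f (n : ℕ) : ℕ := ∑ p ∈ range (n + 1), Nat.centralBinom p * Nat.centralBinom (n - p)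

private def g (n : ℕ) : ℕ := ∑ p ∈ range (n + 1), p * Nat.centralBinom p * Nat.centralBinom (n - p)

private lemma g_sym (n : ℕ) :
    g n = ∑ p ∈ range (n + 1), (n - p) * Nat.centralBinom p * Nat.centralBinom (n - p) := by
  unfold g
  rw [← Finset.sum_range_reflect]
  simp only [Nat.add_sub_cancel]
  refine Finset.sum_congr rfl fun p hp => ?_
  have hpn : p ≤ n := Nat.lt_succ_iff.mp (Finset.mem_range.mp hp)
  have : n - (n - p) = p := Nat.sub_sub_self hpn
  rw [this]
  ring

private lemma two_g (n : ℕ) : 2 * g n = n * f n := by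
  have : 2 * g n = g n + g n := by ring
  rw [this]
  nth_rewrite 1 [g_sym]
  unfold g f
  rw [← Finset.sum_add_distrib, Finset.mul_sum]
  refine Finset.sum_congr rfl fun p hp => ?_
  have hpn : p ≤ n := Nat.lt_succ_iff.mp (Finset.mem_range.mp hp)
  have h : (n - p) + p = n := Nat.sub_add_cancel hpn
  rw [mul_assoc, mul_assoc, ← add_mul, h]

private lemma g_succ (n : ℕ) : g (n + 1) = 2 * (n + 1) * f n := by
  unfold g
  rw [Finset.sum_range_succ']
  simp only [Nat.zero_mul, add_zero, Nat.add_sub_cancel]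
  have key : ∀ q, (q + 1) * Nat.centralBinom (q + 1) = 2 * (2 * q + 1) * Nat.centralBinom q :=
    fun q => Nat.succ_mul_centralBinom_succ q
  have : ∑ q ∈ range (n + 1), (q + 1) * Nat.centralBinom (q + 1) * Nat.centralBinom (n + 1 - (q + 1))
      = ∑ q ∈ range (n + 1), (4 * (q * Nat.centralBinom q * Nat.centralBinom (n - q))
          + 2 * (Nat.centralBinom q * Nat.centralBinom (n - q))) := by
    refine Finset.sum_congr rfl fun q hq => ?_
    have : n + 1 - (q + 1) = n - q := by omega
    rw [this, key q]
    ring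
  rw [this, Finset.sum_add_distrib, ← Finset.mul_sum, ← Finset.mul_sum]
  have hg : (∑ q ∈ range (n + 1), q * Nat.centralBinom q * Nat.centralBinom (n - q)) = g n := rfl
  have hf : (∑ q ∈ range (n + 1), Nat.centralBinom q * Nat.centralBinom (n - q)) = f n := rfl
  rw [hg, hf]
  have h2g := two_g n
  nlinarith [h2g]

private lemma f_eq (n : ℕ) : f n = 4 ^ n := by
  induction n with
  | zero => simp [f, Nat.centralBinom]
  | succ n ih =>
    have h1 : (n + 1) * f (n + 1) = 2 * g (n + 1) := (two_g (n + 1)).symm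
    rw [g_succ] at h1
    have h2 : (n + 1) * f (n + 1) = (n + 1) * (4 * f n) := by linarith
    have := Nat.eq_of_mul_eq_mul_left (Nat.succ_pos n) h2
    rw [this, ih]; ring

theorem stmt5 (n : ℕ) :
    ∑ p ∈ range (n + 1), (n - p) * Nat.choose (2 * p) p * Nat.choose (2 * n - 2 * p) (n - p)
      = n * 2 ^ (2 * n - 1) := by
  have hsum : ∑ p ∈ range (n + 1), (n - p) * Nat.choose (2 * p) p * Nat.choose (2 * n - 2 * p) (n - p)
      = g n := by
    rw [g_sym]
    refine Finset.sum_congr rfl fun p hp => ?_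
    have : 2 * n - 2 * p = 2 * (n - p) := by omega
    rw [this]
    rfl
  rw [hsum]
  rcases Nat.eq_zero_or_pos n with h | h
  · subst h; simp [g, Nat.centralBinom]
  · have h2g := two_g n
    rw [f_eq] at h2g
    have : 2 * g n = 2 * (n * 2 ^ (2 * n - 1)) := by
      have h1 : 2 * n = (2 * n - 1) + 1 := by omega
      have h4 : (4 : ℕ) ^ n = 2 ^ (2 * n - 1) * 2 := by
        rw [show (4 : ℕ) ^ n = 2 ^ (2 * n) by rw [pow_mul]; norm_num]; nth_rewrite 1 [h1]; rw [pow_succ]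
      calc 2 * g n = n * 4 ^ n := h2g
        _ = n * (2 ^ (2 * n - 1) * 2) := by rw [h4]
        _ = 2 * (n * 2 ^ (2 * n - 1)) := by ring
    exact Nat.eq_of_mul_eq_mul_left (by norm_num) this
end

section
/- For all positive integers n, sum over p from 0 to n of binom(n,p) * 2*binom(p,2) * (2p-1)!! * (2(n-p)-1)!! equals (2n)!! * 3*n*(n-1)/8. -/
open Finset

namespace Stmt7Aux

noncomputable def D (p : ℕ) : ℚ := (Nat.doubleFactorial (2 * p - 1) : ℚ)

lemma D_succ (p : ℕ) : D (p + 1) = (2 * (p : ℚ) + 1) * D p := by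
  cases p with
  | zero => norm_num [D, Nat.doubleFactorial]
  | succ q =>
    have h : 2 * (q + 1 + 1) - 1 = (2 * (q + 1) - 1) + 2 := by omega
    have h2 : (2 * (q + 1) - 1) + 2 = 2 * (q + 1) + 1 := by omega
    rw [D, h, Nat.doubleFactorial_add_two, h2, D]
    push_cast
    ring

lemma step (n : ℕ) (W : ℕ → ℚ) :
    ∑ p ∈ range (n + 2), (Nat.choose (n + 1) p : ℚ) * W p * D p * D (n + 1 - p)
      = ∑ p ∈ range (n + 1), (Nat.choose n p : ℚ) *
          (W p * (2 * ((n : ℚ) - p) + 1) + W (p + 1) * (2 * p + 1)) * D p * D (n - p) := by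
  set f : ℕ → ℚ := fun p => (Nat.choose (n + 1) p : ℚ) * W p * D p * D (n + 1 - p) with hf
  set g : ℕ → ℚ := fun p => (Nat.choose n p : ℚ) * W p * D p * D (n + 1 - p) with hg
  have hsplit : ∀ p ∈ range (n + 1),
      f (p + 1) = (Nat.choose n p : ℚ) * (W (p + 1) * (2 * p + 1)) * D p * D (n - p)
          + g (p + 1) := by
    intro p hp
    simp only [hf, hg]
    have hsub : n + 1 - (p + 1) = n - p := by omega
    rw [hsub, Nat.choose_succ_succ, D_succ]
    push_cast
    ring
  have h1 : ∑ p ∈ range (n + 2), f p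
      = ∑ p ∈ range (n + 1), (Nat.choose n p : ℚ) * (W (p + 1) * (2 * p + 1)) * D p * D (n - p)
        + (∑ p ∈ range (n + 1), g (p + 1) + f 0) := by
    rw [Finset.sum_range_succ' f (n + 1), Finset.sum_congr rfl hsplit,
      Finset.sum_add_distrib]
    ring
  have hf0 : f 0 = g 0 := by simp [hf, hg]
  have h2 : ∑ p ∈ range (n + 1), g (p + 1) + f 0 = ∑ p ∈ range (n + 2), g p := by
    rw [hf0, Finset.sum_range_succ' g (n + 1)]
  have h3 : ∑ p ∈ range (n + 2), g p = ∑ p ∈ range (n + 1), g p := by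
    rw [Finset.sum_range_succ]
    simp [hg, Nat.choose_succ_self]
  have h4 : ∀ p ∈ range (n + 1),
      g p = (Nat.choose n p : ℚ) * (W p * (2 * ((n : ℚ) - p) + 1)) * D p * D (n - p) := by
    intro p hp
    have hp' : p < n + 1 := mem_range.mp hp
    have hsub : n + 1 - p = (n - p) + 1 := by omega
    have hcast : ((n - p : ℕ) : ℚ) = (n : ℚ) - p := by
      have : p ≤ n := by omega
      push_cast [this]; ring
    simp only [hg, hsub, D_succ, hcast]
    ring
  rw [h1, h2, h3, Finset.sum_congr rfl h4, ← Finset.sum_add_distrib]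
  apply Finset.sum_congr rfl
  intro p hp
  ring

lemma S0 (n : ℕ) :
    ∑ p ∈ range (n + 1), (Nat.choose n p : ℚ) * (1 : ℚ) * D p * D (n - p)
      = 2 ^ n * n.factorial := by
  induction n with
  | zero => norm_num [D, Nat.doubleFactorial]
  | succ m ih =>
    rw [step m (fun _ => (1 : ℚ))]
    have : ∀ p ∈ range (m + 1),
        (Nat.choose m p : ℚ) * ((1 : ℚ) * (2 * ((m : ℚ) - p) + 1) + 1 * (2 * p + 1)) * D p * D (m - p)
          = (2 * m + 2) * ((Nat.choose m p : ℚ) * 1 * D p * D (m - p)) := by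
      intro p _; ring
    rw [Finset.sum_congr rfl this, ← Finset.mul_sum, ih, Nat.factorial_succ]
    push_cast
    ring

lemma S1 (n : ℕ) :
    ∑ p ∈ range (n + 1), (Nat.choose n p : ℚ) * (p : ℚ) * D p * D (n - p)
      = 2 ^ n * n.factorial * (n / 2) := by
  induction n with
  | zero => norm_num
  | succ m ih =>
    rw [step m (fun p => (p : ℚ))]
    have : ∀ p ∈ range (m + 1),
        (Nat.choose m p : ℚ) * ((p : ℚ) * (2 * ((m : ℚ) - p) + 1) + ((p + 1 : ℕ) : ℚ) * (2 * p + 1)) * D p * D (m - p)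
          = (2 * m + 4) * ((Nat.choose m p : ℚ) * (p : ℚ) * D p * D (m - p))
            + (Nat.choose m p : ℚ) * 1 * D p * D (m - p) := by
      intro p _; push_cast; ring
    rw [Finset.sum_congr rfl this, Finset.sum_add_distrib, ← Finset.mul_sum, ih, S0,
      Nat.factorial_succ]
    push_cast
    ring

lemma S2 (n : ℕ) :
    ∑ p ∈ range (n + 1), (Nat.choose n p : ℚ) * ((p : ℚ) * ((p : ℚ) - 1)) * D p * D (n - p)
      = 2 ^ n * n.factorial * (3 * (n : ℚ) * ((n : ℚ) - 1) / 8) := by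
  induction n with
  | zero => norm_num
  | succ m ih =>
    rw [step m (fun p => (p : ℚ) * ((p : ℚ) - 1))]
    have : ∀ p ∈ range (m + 1),
        (Nat.choose m p : ℚ) * (((p : ℚ) * ((p : ℚ) - 1)) * (2 * ((m : ℚ) - p) + 1)
            + (((p + 1 : ℕ) : ℚ) * (((p + 1 : ℕ) : ℚ) - 1)) * (2 * p + 1)) * D p * D (m - p)
          = (2 * m + 6) * ((Nat.choose m p : ℚ) * ((p : ℚ) * ((p : ℚ) - 1)) * D p * D (m - p))
            + 6 * ((Nat.choose m p : ℚ) * (p : ℚ) * D p * D (m - p)) := by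
      intro p _; push_cast; ring
    rw [Finset.sum_congr rfl this, Finset.sum_add_distrib, ← Finset.mul_sum, ← Finset.mul_sum,
      ih, S1, Nat.factorial_succ]
    push_cast
    ring

end Stmt7Aux

theorem stmt7 (n : ℕ) (hn : 0 < n) :
    ∑ p ∈ range (n + 1),
        (Nat.choose n p : ℚ) * (2 * Nat.choose p 2) * Nat.doubleFactorial (2 * p - 1) *
          Nat.doubleFactorial (2 * (n - p) - 1)
      = (2 : ℚ) ^ n * n.factorial * (3 * (n : ℚ) * ((n : ℚ) - 1) / 8) := by
  have := Stmt7Aux.S2 n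
  rw [← this]
  apply Finset.sum_congr rfl
  intro p hp
  have h2 : (2 : ℚ) * (Nat.choose p 2 : ℚ) = (p : ℚ) * ((p : ℚ) - 1) := by
    rw [Nat.cast_choose_two]
    ring
  rw [Stmt7Aux.D, Stmt7Aux.D, h2]
end

section
/- For all positive integers n, sum over p from 0 to n of binom(n,p) * 2*p * binom(2(n-p), 2) * (2p-1)!! * (2(n-p-1)-1)!! equals (2n)!! * 2*n*(n-1)/8, where terms with n-p-1 < 0 are taken to be zero. -/
open Finset
open scoped Nat

/-!
Writing `(2k-1)‼ = C(2k,k) k! / 2^k` and `C(2q,2) (2q-3)‼ = q (2q-1)‼`, the sum becomes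
`2 n! / 2^n · ∑_{p+q=n} p q C(2p,p) C(2q,q)`. With `c k = C(2k,k)`, the recurrence
`(k+1) c (k+1) = 2 (2k+1) c k` gives `∑_{p+q=n+2} p q c p c q = 16 ∑_{p+q=n} p q c p c q
+ 4 (2n+1) ∑_{p+q=n} c p c q`, and the last convolution is `4^n`: by symmetry
`∑_{p+q=n} p c p c q = (n/2) ∑_{p+q=n} c p c q`, and the same recurrence turns this into
`∑_{p+q=n+1} c p c q = 4 ∑_{p+q=n} c p c q`. Hence `∑_{p+q=n} p q c p c q = 4^(n-1) C(n,2)`.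
-/

theorem two_mul_sum_antidiagonal_fst_mul {R : Type*} [CommSemiring R] (n : ℕ) (f : ℕ → ℕ → R)
    (hf : ∀ i j, f i j = f j i) :
    2 * ∑ x ∈ antidiagonal n, (x.1 : R) * f x.1 x.2 = n * ∑ x ∈ antidiagonal n, f x.1 x.2 := by
  have hswap : ∑ x ∈ antidiagonal n, (x.1 : R) * f x.1 x.2
      = ∑ x ∈ antidiagonal n, (x.2 : R) * f x.1 x.2 := by
    rw [← Finset.Nat.sum_antidiagonal_swap]
    simp only [Prod.fst_swap, Prod.snd_swap, hf]
  rw [two_mul]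
  nth_rw 2 [hswap]
  rw [mul_sum, ← sum_add_distrib]
  refine sum_congr rfl fun x hx => ?_
  rw [← mem_antidiagonal.1 hx, Nat.cast_add, add_mul]

theorem sum_antidiagonal_centralBinom_mul_centralBinom (n : ℕ) :
    ∑ x ∈ antidiagonal n, x.1.centralBinom * x.2.centralBinom = 4 ^ n := by
  induction n with
  | zero => simp
  | succ n ih =>
    have hsym (m : ℕ) := two_mul_sum_antidiagonal_fst_mul m
      (fun i j => i.centralBinom * j.centralBinom) fun i j => mul_comm _ _
    simp only [Nat.cast_id] at hsym
    refine Nat.eq_of_mul_eq_mul_left n.succ_pos ?_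
    calc (n + 1) * ∑ x ∈ antidiagonal (n + 1), x.1.centralBinom * x.2.centralBinom
        = 2 * ∑ x ∈ antidiagonal n,
            (x.1 + 1) * (x.1 + 1).centralBinom * x.2.centralBinom := by
          rw [← hsym, Nat.sum_antidiagonal_succ]
          simp only [zero_mul, zero_add, mul_assoc]
      _ = 4 * (2 * ∑ x ∈ antidiagonal n, x.1 * (x.1.centralBinom * x.2.centralBinom))
            + 4 * ∑ x ∈ antidiagonal n, x.1.centralBinom * x.2.centralBinom := by
          simp only [Nat.succ_mul_centralBinom_succ, mul_sum, ← sum_add_distrib]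
          exact sum_congr rfl fun x _ => by ring
      _ = (n + 1) * 4 ^ (n + 1) := by
          rw [hsym, ih]
          ring

theorem four_mul_sum_antidiagonal_mul_mul_centralBinom_mul_centralBinom : ∀ n : ℕ,
    4 * ∑ x ∈ antidiagonal n, x.1 * x.2 * x.1.centralBinom * x.2.centralBinom
      = 4 ^ n * n.choose 2
  | 0 => by simp
  | 1 => rfl
  | n + 2 => by
    have hshift : ∑ x ∈ antidiagonal (n + 2), x.1 * x.2 * x.1.centralBinom * x.2.centralBinom
        = ∑ x ∈ antidiagonal n,
            (x.1 + 1) * (x.1 + 1).centralBinom * ((x.2 + 1) * (x.2 + 1).centralBinom) := by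
      rw [Nat.sum_antidiagonal_succ, Nat.sum_antidiagonal_succ']
      simp only [zero_mul, mul_zero, zero_add]
      exact sum_congr rfl fun x _ => by ring
    have hsplit : ∑ x ∈ antidiagonal n,
            (x.1 + 1) * (x.1 + 1).centralBinom * ((x.2 + 1) * (x.2 + 1).centralBinom)
        = 16 * ∑ x ∈ antidiagonal n, x.1 * x.2 * x.1.centralBinom * x.2.centralBinom
          + 4 * (2 * n + 1) * ∑ x ∈ antidiagonal n, x.1.centralBinom * x.2.centralBinom := by
      rw [mul_sum, mul_sum, ← sum_add_distrib]
      refine sum_congr rfl fun x hx => ?_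
      rw [Nat.succ_mul_centralBinom_succ, Nat.succ_mul_centralBinom_succ,
        ← mem_antidiagonal.1 hx]
      ring
    have hchoose : (n + 2).choose 2 = n.choose 2 + (2 * n + 1) := by
      simp [Nat.choose_succ_succ']
      ring
    rw [hshift, hsplit, mul_add, ← mul_assoc, mul_comm 4 16, mul_assoc,
      four_mul_sum_antidiagonal_mul_mul_centralBinom_mul_centralBinom n,
      sum_antidiagonal_centralBinom_mul_centralBinom, hchoose]
    ring

theorem two_pow_mul_doubleFactorial_two_mul_sub_one (k : ℕ) :
    2 ^ k * (2 * k - 1)‼ = k.centralBinom * k ! := by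
  rcases k with _ | k
  · simp
  refine Nat.eq_of_mul_eq_mul_right (k + 1).factorial_pos ?_
  have h := Nat.factorial_eq_mul_doubleFactorial (2 * k + 1)
  rw [show 2 * k + 1 + 1 = 2 * (k + 1) by ring, Nat.doubleFactorial_two_mul] at h
  calc 2 ^ (k + 1) * (2 * (k + 1) - 1)‼ * (k + 1)! = (2 * (k + 1))! := by
        rw [h, show 2 * (k + 1) - 1 = 2 * k + 1 by omega]; ring
    _ = (k + 1).centralBinom * (k + 1)! * (k + 1)! := by
        have := Nat.choose_mul_factorial_mul_factorial (show k + 1 ≤ 2 * (k + 1) by omega)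
        rwa [show 2 * (k + 1) - (k + 1) = k + 1 by omega, eq_comm] at this

theorem choose_two_mul_two_mul_doubleFactorial_pred (q : ℕ) :
    (2 * q).choose 2 * (2 * (q - 1) - 1)‼ = q * (2 * q - 1)‼ := by
  rcases q with _ | m
  · simp
  have hchoose : (2 * (m + 1)).choose 2 = (m + 1) * (2 * m + 1) := by
    rw [Nat.choose_two_right]
    exact Nat.div_eq_of_eq_mul_left two_pos (by rw [show 2 * (m + 1) - 1 = 2 * m + 1 by omega]; ring)
  rw [hchoose, show 2 * (m + 1) - 1 = 2 * m + 1 by omega, Nat.doubleFactorial_add_one,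
    Nat.add_sub_cancel]
  ring_nf

theorem two_pow_mul_choose_mul_doubleFactorial_eq {n p : ℕ} (hp : p ≤ n) :
    2 ^ n * (n.choose p * (2 * p) * (2 * (n - p)).choose 2 * (2 * p - 1)‼ *
        (2 * (n - p - 1) - 1)‼)
      = 2 * n ! * (p * (n - p) * p.centralBinom * (n - p).centralBinom) := by
  obtain ⟨q, rfl⟩ := Nat.exists_eq_add_of_le hp
  have hfac := Nat.choose_mul_factorial_mul_factorial (Nat.le_add_right p q)
  rw [Nat.add_sub_cancel_left] at hfac ⊢
  calc 2 ^ (p + q) * ((p + q).choose p * (2 * p) * (2 * q).choose 2 * (2 * p - 1)‼ *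
        (2 * (q - 1) - 1)‼)
      = 2 ^ (p + q) * ((p + q).choose p * (2 * p) * (2 * p - 1)‼ *
          ((2 * q).choose 2 * (2 * (q - 1) - 1)‼)) := by ring
    _ = 2 * (p + q).choose p * p * q * (2 ^ p * (2 * p - 1)‼) * (2 ^ q * (2 * q - 1)‼) := by
        rw [choose_two_mul_two_mul_doubleFactorial_pred]
        ring
    _ = 2 * (p + q) ! * (p * q * p.centralBinom * q.centralBinom) := by
        rw [two_pow_mul_doubleFactorial_two_mul_sub_one,
          two_pow_mul_doubleFactorial_two_mul_sub_one, ← hfac]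
        ring

theorem two_mul_sum_range_choose_mul_doubleFactorial (n : ℕ) :
    2 * ∑ p ∈ range (n + 1), n.choose p * (2 * p) * (2 * (n - p)).choose 2 *
      (2 * p - 1)‼ * (2 * (n - p - 1) - 1)‼ = 2 ^ n * n ! * n.choose 2 := by
  refine Nat.eq_of_mul_eq_mul_left (pow_pos two_pos n) ?_
  calc 2 ^ n * (2 * ∑ p ∈ range (n + 1), n.choose p * (2 * p) * (2 * (n - p)).choose 2 *
        (2 * p - 1)‼ * (2 * (n - p - 1) - 1)‼)
      = 2 * ∑ p ∈ range (n + 1),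
          2 * n ! * (p * (n - p) * p.centralBinom * (n - p).centralBinom) := by
        rw [mul_left_comm, mul_sum]
        exact congrArg _ (sum_congr rfl fun p hp =>
          two_pow_mul_choose_mul_doubleFactorial_eq (Nat.lt_succ_iff.1 (mem_range.1 hp)))
    _ = n ! * (4 * ∑ x ∈ antidiagonal n, x.1 * x.2 * x.1.centralBinom * x.2.centralBinom) := by
        rw [Nat.sum_antidiagonal_eq_sum_range_succ
          (fun i j => i * j * i.centralBinom * j.centralBinom), ← mul_sum]
        ring
    _ = 2 ^ n * (2 ^ n * n ! * n.choose 2) := by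
        rw [four_mul_sum_antidiagonal_mul_mul_centralBinom_mul_centralBinom,
          show (4 : ℕ) ^ n = 2 ^ n * 2 ^ n by rw [← mul_pow]; rfl]
        ring

theorem stmt8_general (n : ℕ) :
    ∑ p ∈ range (n + 1),
        (Nat.choose n p : ℚ) * (2 * p) * Nat.choose (2 * (n - p)) 2 *
          Nat.doubleFactorial (2 * p - 1) * Nat.doubleFactorial (2 * (n - p - 1) - 1)
      = (2 : ℚ) ^ n * n.factorial * (2 * (n : ℚ) * ((n : ℚ) - 1) / 8) := by
  have h := congrArg (Nat.cast : ℕ → ℚ) (two_mul_sum_range_choose_mul_doubleFactorial n)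
  push_cast at h
  rw [Nat.cast_choose_two] at h
  linarith

theorem stmt8 (n : ℕ) (hn : 0 < n) :
    ∑ p ∈ range (n + 1),
        (Nat.choose n p : ℚ) * (2 * p) * Nat.choose (2 * (n - p)) 2 *
          Nat.doubleFactorial (2 * p - 1) * Nat.doubleFactorial (2 * (n - p - 1) - 1)
      = (2 : ℚ) ^ n * n.factorial * (2 * (n : ℚ) * ((n : ℚ) - 1) / 8) :=
  stmt8_general n
end

section
/- For all positive integers n, sum over p from 0 to n of binom(n,p) * 6 * binom(2p, 4) * (2(p-2)-1)!! * (2(n-p)-1)!! equals (2n)!! * 3*n*(n-1)/8, where binom(2p,4) = 0 for p < 2 makes those terms vanish. -/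
open Finset

noncomputable def DD (p : ℕ) : ℚ := (Nat.doubleFactorial (2 * p - 1) : ℚ)

lemma DD_succ (p : ℕ) : DD (p + 1) = (2 * p + 1) * DD p := by
  cases p with
  | zero => simp [DD, Nat.doubleFactorial]
  | succ q =>
    have h1 : 2 * (q + 1 + 1) - 1 = (2 * q + 1) + 2 := by omega
    have h2 : 2 * (q + 1) - 1 = 2 * q + 1 := by omega
    unfold DD
    rw [h1, h2, Nat.doubleFactorial]
    push_cast
    ring

lemma pascal_sum (n : ℕ) (f : ℕ → ℚ) :
    ∑ p ∈ range (n + 2), (Nat.choose (n + 1) p : ℚ) * f p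
      = ∑ p ∈ range (n + 1), (Nat.choose n p : ℚ) * f p
        + ∑ p ∈ range (n + 1), (Nat.choose n p : ℚ) * f (p + 1) := by
  rw [Finset.sum_range_succ' (fun p => (Nat.choose (n + 1) p : ℚ) * f p)]
  have : ∀ p, (Nat.choose (n + 1) (p + 1) : ℚ) = Nat.choose n p + Nat.choose n (p + 1) := by
    intro p; rw [Nat.choose_succ_succ]; push_cast; ring
  simp only [this, add_mul]
  rw [Finset.sum_add_distrib]
  have h2 : ∑ p ∈ range (n + 1), (Nat.choose n (p + 1) : ℚ) * f (p + 1)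
      + (Nat.choose (n+1) 0 : ℚ) * f 0
      = ∑ p ∈ range (n + 1), (Nat.choose n p : ℚ) * f p := by
    rw [show ((Nat.choose (n+1) 0 : ℕ) : ℚ) = ((Nat.choose n 0 : ℕ) : ℚ) by simp]
    rw [← Finset.sum_range_succ' (fun p => (Nat.choose n p : ℚ) * f p)]
    rw [Finset.sum_range_succ]
    simp
  linarith [h2]

noncomputable def SA (n : ℕ) : ℚ := ∑ p ∈ range (n + 1), (Nat.choose n p : ℚ) * (DD p * DD (n - p))
noncomputable def SB (n : ℕ) : ℚ := ∑ p ∈ range (n + 1), (Nat.choose n p : ℚ) * ((p : ℚ) * (DD p * DD (n - p)))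
noncomputable def SC (n : ℕ) : ℚ := ∑ p ∈ range (n + 1), (Nat.choose n p : ℚ) * ((p : ℚ) * ((p : ℚ) - 1) * (DD p * DD (n - p)))

lemma step_split (n : ℕ) (w : ℕ → ℚ) :
    ∑ p ∈ range (n + 2), (Nat.choose (n + 1) p : ℚ) * (w p * (DD p * DD (n + 1 - p)))
      = ∑ p ∈ range (n + 1), (Nat.choose n p : ℚ) *
          ((w p * (2 * ((n : ℚ) - p) + 1) + w (p + 1) * (2 * p + 1)) * (DD p * DD (n - p))) := by
  rw [pascal_sum n (fun p => w p * (DD p * DD (n + 1 - p)))]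
  rw [← Finset.sum_add_distrib]
  refine Finset.sum_congr rfl ?_
  intro p hp
  have hpn : p ≤ n := by simpa [Nat.lt_succ_iff] using hp
  have h1 : n + 1 - p = (n - p) + 1 := by omega
  have h2 : n + 1 - (p + 1) = n - p := by omega
  rw [h1, h2, DD_succ (n - p), DD_succ p]
  have h3 : ((n - p : ℕ) : ℚ) = (n : ℚ) - p := by
    push_cast [Nat.cast_sub hpn]; ring
  rw [h3]
  ring

lemma SA_eq (n : ℕ) : SA n = 2 ^ n * n.factorial := by
  induction n with
  | zero => simp [SA, DD]
  | succ n ih =>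
    have := step_split n (fun _ => 1)
    simp only [one_mul] at this
    rw [SA, this]
    have : ∀ p ∈ range (n + 1), (Nat.choose n p : ℚ) *
        ((2 * ((n : ℚ) - p) + 1 + (2 * (p : ℚ) + 1)) * (DD p * DD (n - p)))
        = (2 * (n : ℚ) + 2) * ((Nat.choose n p : ℚ) * (DD p * DD (n - p))) := by
      intro p _; ring
    rw [Finset.sum_congr rfl this, ← Finset.mul_sum, ← SA, ih]
    rw [Nat.factorial_succ]
    push_cast
    ring

lemma SB_eq (n : ℕ) : SB n = 2 ^ n * n.factorial * n / 2 := by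
  induction n with
  | zero => simp [SB]
  | succ n ih =>
    have hs := step_split n (fun p => (p : ℚ))
    push_cast at hs
    rw [SB, hs]
    have : ∀ p ∈ range (n + 1), (Nat.choose n p : ℚ) *
        (((p : ℚ) * (2 * ((n : ℚ) - p) + 1) + ((p : ℚ) + 1) * (2 * (p : ℚ) + 1)) * (DD p * DD (n - p)))
        = (2 * (n : ℚ) + 4) * ((Nat.choose n p : ℚ) * ((p : ℚ) * (DD p * DD (n - p))))
          + (Nat.choose n p : ℚ) * (DD p * DD (n - p)) := by
      intro p _; push_cast; ring
    rw [Finset.sum_congr rfl this, Finset.sum_add_distrib, ← Finset.mul_sum, ← SB, ← SA, ih, SA_eq]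
    rw [Nat.factorial_succ]
    push_cast
    ring

lemma SC_eq (n : ℕ) : SC n = 2 ^ n * n.factorial * (3 * (n : ℚ) * ((n : ℚ) - 1) / 8) := by
  induction n with
  | zero => simp [SC]
  | succ n ih =>
    have hs := step_split n (fun p => (p : ℚ) * ((p : ℚ) - 1))
    push_cast at hs
    rw [SC, hs]
    have : ∀ p ∈ range (n + 1), (Nat.choose n p : ℚ) *
        (((p : ℚ) * ((p : ℚ) - 1) * (2 * ((n : ℚ) - p) + 1)
          + ((p : ℚ) + 1) * (((p : ℚ) + 1) - 1) * (2 * (p : ℚ) + 1)) * (DD p * DD (n - p)))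
        = (2 * (n : ℚ) + 6) * ((Nat.choose n p : ℚ) * ((p : ℚ) * ((p : ℚ) - 1) * (DD p * DD (n - p))))
          + 6 * ((Nat.choose n p : ℚ) * ((p : ℚ) * (DD p * DD (n - p)))) := by
      intro p _; push_cast; ring
    rw [Finset.sum_congr rfl this, Finset.sum_add_distrib, ← Finset.mul_sum, ← Finset.mul_sum,
      ← SC, ← SB, ih, SB_eq]
    rw [Nat.factorial_succ]
    push_cast
    ring

lemma term_eq (p : ℕ) :
    ((6 * Nat.choose (2 * p) 4 : ℕ) : ℚ) * (Nat.doubleFactorial (2 * (p - 2) - 1) : ℚ)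
      = (p : ℚ) * ((p : ℚ) - 1) * DD p := by
  match p with
  | 0 => simp [DD, Nat.doubleFactorial]
  | 1 =>
    have : Nat.choose 2 4 = 0 := by decide
    simp [this]
  | (q + 2) =>
    have hc : 6 * Nat.choose (2 * (q + 2)) 4 = (q + 2) * (q + 1) * (2 * q + 3) * (2 * q + 1) := by
      have h24 : 24 * Nat.choose (2 * (q + 2)) 4 = Nat.descFactorial (2 * (q + 2)) 4 := by
        rw [Nat.descFactorial_eq_factorial_mul_choose]
        norm_num [Nat.factorial]
      have hd : Nat.descFactorial (2 * (q + 2)) 4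
          = (2 * q + 1) * ((2 * q + 2) * ((2 * q + 3) * (2 * q + 4))) := by
        simp [Nat.descFactorial]
        have e1 : 2 * (q + 2) - 1 = 2 * q + 3 := by omega
        have e2 : 2 * (q + 2) - 2 = 2 * q + 2 := by omega
        have e3 : 2 * (q + 2) - 3 = 2 * q + 1 := by omega
        rw [e1, e2, e3]
        ring
      have : 4 * (6 * Nat.choose (2 * (q + 2)) 4)
          = 4 * ((q + 2) * (q + 1) * (2 * q + 3) * (2 * q + 1)) := by
        rw [show 4 * (6 * Nat.choose (2 * (q + 2)) 4) = 24 * Nat.choose (2 * (q + 2)) 4 by ring,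
          h24, hd]
        ring
      omega
    have hD : DD (q + 2) = ((2 * q + 3 : ℚ)) * (2 * q + 1) * (Nat.doubleFactorial (2 * q - 1) : ℚ) := by
      rw [DD_succ (q + 1), DD_succ q]
      simp [DD]
      push_cast
      ring
    have hsub : 2 * (q + 2 - 2) - 1 = 2 * q - 1 := by omega
    rw [hc, hsub, hD]
    push_cast
    ring

theorem stmt9 (n : ℕ) (hn : 0 < n) :
    ∑ p ∈ range (n + 1),
        (Nat.choose n p : ℚ) * (6 * Nat.choose (2 * p) 4) *
          Nat.doubleFactorial (2 * (p - 2) - 1) * Nat.doubleFactorial (2 * (n - p) - 1)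
      = (2 : ℚ) ^ n * n.factorial * (3 * (n : ℚ) * ((n : ℚ) - 1) / 8) := by
  rw [← SC_eq n, SC]
  refine Finset.sum_congr rfl ?_
  intro p hp
  have := term_eq p
  push_cast at this ⊢
  rw [show (Nat.doubleFactorial (2 * (n - p) - 1) : ℚ) = DD (n - p) from rfl]
  linear_combination (Nat.choose n p : ℚ) * DD (n - p) * this
end

section
/- For all integers n >= 2, sum over p from 0 to n-2 of 4 * binom(n,2) * binom(n-2, p) * (2p+1)!! * (2(n-p-2)+1)!! equals (2n)!! * 2*n*(n-1)/8. -/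
open Finset

private lemma step (m : ℕ) :
    ∑ p ∈ range (m + 2), ((m+1).choose p : ℚ) * ((2*p+1).doubleFactorial : ℚ) * ((2*(m+1-p)+1).doubleFactorial : ℚ)
      = (2*(m:ℚ)+6) * ∑ p ∈ range (m + 1), ((m.choose p : ℚ)) * ((2*p+1).doubleFactorial : ℚ) * ((2*(m-p)+1).doubleFactorial : ℚ) := by
  rw [Finset.sum_range_succ']
  have hsplit : ∀ p ∈ range (m+1),
      (((m+1).choose (p+1) : ℚ)) * ((2*(p+1)+1).doubleFactorial : ℚ) * ((2*(m+1-(p+1))+1).doubleFactorial : ℚ)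
        = ((m.choose p : ℚ)) * (((2*p+3) : ℚ) * ((2*p+1).doubleFactorial : ℚ)) * ((2*(m-p)+1).doubleFactorial : ℚ)
          + ((m.choose (p+1) : ℚ)) * ((2*(p+1)+1).doubleFactorial : ℚ) * ((2*(m+1-(p+1))+1).doubleFactorial : ℚ) := by
    intro p hp
    rw [Nat.choose_succ_succ]
    have h1 : 2*(p+1)+1 = 2*p+1+2 := by ring
    have h2 : m+1-(p+1) = m - p := by omega
    rw [h1, Nat.doubleFactorial_add_two, h2]
    push_cast
    ring
  rw [Finset.sum_congr rfl hsplit, Finset.sum_add_distrib]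
  have hB : ∑ p ∈ range (m+1), ((m.choose (p+1):ℚ)) * ((2*(p+1)+1).doubleFactorial : ℚ) * ((2*(m+1-(p+1))+1).doubleFactorial : ℚ)
      = (∑ q ∈ range (m+1), ((m.choose q:ℚ)) * ((2*q+1).doubleFactorial : ℚ) * ((2*(m+1-q)+1).doubleFactorial : ℚ)) - ((2*(m+1)+1).doubleFactorial : ℚ) := by
    rw [eq_sub_iff_add_eq]
    have h1 := Finset.sum_range_succ' (fun q => ((m.choose q:ℚ)) * ((2*q+1).doubleFactorial : ℚ) * ((2*(m+1-q)+1).doubleFactorial : ℚ)) (m+1)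
    have h2 := Finset.sum_range_succ (fun q => ((m.choose q:ℚ)) * ((2*q+1).doubleFactorial : ℚ) * ((2*(m+1-q)+1).doubleFactorial : ℚ)) (m+1)
    simp only [Nat.choose_succ_self, Nat.cast_zero, zero_mul] at h2
    simp only [Nat.choose_zero_right, Nat.cast_one, one_mul, Nat.sub_zero, mul_zero, zero_mul, add_zero] at h1 h2
    rw [← h2, h1]
    norm_num
  rw [hB]
  have key2 : ∀ q ∈ range (m+1),
      ((m.choose q:ℚ)) * ((2*q+3:ℚ) * ((2*q+1).doubleFactorial:ℚ)) * ((2*(m-q)+1).doubleFactorial:ℚ)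
        + ((m.choose q:ℚ)) * ((2*q+1).doubleFactorial:ℚ) * ((2*(m+1-q)+1).doubleFactorial:ℚ)
      = (2*(m:ℚ)+6) * (((m.choose q:ℚ)) * ((2*q+1).doubleFactorial:ℚ) * ((2*(m-q)+1).doubleFactorial:ℚ)) := by
    intro q hq
    have hq' : q ≤ m := Nat.lt_succ_iff.mp (mem_range.mp hq)
    have h2 : 2*(m+1-q)+1 = 2*(m-q)+1+2 := by omega
    rw [h2, Nat.doubleFactorial_add_two]
    push_cast [Nat.cast_sub hq']
    ring
  have final : (∑ q ∈ range (m+1), ((m.choose q:ℚ)) * ((2*q+3:ℚ) * ((2*q+1).doubleFactorial:ℚ)) * ((2*(m-q)+1).doubleFactorial:ℚ))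
      + (∑ q ∈ range (m+1), ((m.choose q:ℚ)) * ((2*q+1).doubleFactorial:ℚ) * ((2*(m+1-q)+1).doubleFactorial:ℚ))
      = (2*(m:ℚ)+6) * ∑ p ∈ range (m + 1), ((m.choose p : ℚ)) * ((2*p+1).doubleFactorial : ℚ) * ((2*(m-p)+1).doubleFactorial : ℚ) := by
    rw [← Finset.sum_add_distrib, Finset.sum_congr rfl key2, ← Finset.mul_sum]
  have hf0 : (((m+1).choose 0 : ℚ)) * ((2*0+1).doubleFactorial:ℚ) * ((2*(m+1-0)+1).doubleFactorial:ℚ)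
      = ((2*(m+1)+1).doubleFactorial:ℚ) := by norm_num
  linarith [final, hf0]

private lemma key : ∀ m : ℕ,
    2 * ∑ p ∈ range (m + 1), ((m.choose p : ℚ)) * ((2*p+1).doubleFactorial : ℚ) * ((2*(m-p)+1).doubleFactorial : ℚ)
      = 2 ^ m * ((m+2).factorial : ℚ) := by
  intro m
  induction m with
  | zero => norm_num [Nat.doubleFactorial, Nat.factorial]
  | succ m ih =>
      have hs := step m
      rw [show m + 1 + 1 = m + 2 from rfl] at hs
      rw [hs]
      have hf : ((m+3).factorial : ℚ) = (m+3) * ((m+2).factorial : ℚ) := by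
        rw [show m+3 = (m+2)+1 from rfl, Nat.factorial_succ]; push_cast; ring
      rw [show m+1+2 = m+3 from rfl, hf, pow_succ]
      linear_combination (2*(m:ℚ)+6) * ih

theorem stmt11 (n : ℕ) (hn : 2 ≤ n) :
    ∑ p ∈ range (n - 1),
        (4 : ℚ) * Nat.choose n 2 * Nat.choose (n - 2) p *
          Nat.doubleFactorial (2 * p + 1) * Nat.doubleFactorial (2 * (n - p - 2) + 1)
      = (2 : ℚ) ^ n * n.factorial * (2 * (n : ℚ) * ((n : ℚ) - 1) / 8) := by
  obtain ⟨m, rfl⟩ : ∃ m, n = m + 2 := ⟨n - 2, by omega⟩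
  have hterm : ∀ p ∈ range (m + 2 - 1),
      (4 : ℚ) * Nat.choose (m+2) 2 * Nat.choose (m + 2 - 2) p *
          Nat.doubleFactorial (2 * p + 1) * Nat.doubleFactorial (2 * (m + 2 - p - 2) + 1)
        = (4 : ℚ) * Nat.choose (m+2) 2 *
          (((m.choose p : ℚ)) * ((2*p+1).doubleFactorial : ℚ) * ((2*(m-p)+1).doubleFactorial : ℚ)) := by
    intro p hp
    have h1 : m + 2 - 2 = m := by omega
    have h2 : m + 2 - p - 2 = m - p := by omega
    rw [h1, h2]; ring
  rw [show m + 2 - 1 = m + 1 from rfl] at hterm ⊢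
  rw [Finset.sum_congr rfl hterm, ← Finset.mul_sum]
  have hk := key m
  have hC : ((m+2).choose 2 : ℚ) * 2 = (m+2) * (m+1) := by
    rw [Nat.choose_two_right]
    have hev : 2 ∣ (m+2) * (m+2-1) := by
      have h := Nat.even_mul_succ_self (m+1)
      rw [show m+2-1 = m+1 from rfl, show (m+2) * (m+1) = (m+1)*(m+1+1) by ring]
      exact h.two_dvd
    rw [show ((m+2) * (m+2-1) / 2 : ℕ) * (2:ℚ) = (((m+2) * (m+2-1) / 2 * 2 : ℕ) : ℚ) by push_cast; ring,
      Nat.div_mul_cancel hev]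
    push_cast; ring
  push_cast at hC ⊢
  linear_combination (2*(((m+2).choose 2 : ℚ))) * hk + (2:ℚ)^m * ((m+2).factorial : ℚ) * hC
end

section
/- For every positive integer n, the first subleading coefficient c_{2n-1} of the second moment of hafnians, defined as the sum of contributions (1)-(9) given by the nine explicit double-factorial sums in the paper, equals (2n)!! * (3n-2) * n. -/
open Finset Nat


def A (p : ℕ) : ℕ := Nat.doubleFactorial (2*p-1)
def B (p : ℕ) : ℕ := Nat.doubleFactorial (2*p+1)

lemma odd_df (p : ℕ) : Nat.doubleFactorial (2*p+1) = (2*p+1) * Nat.doubleFactorial (2*p-1) := by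
  cases p with
  | zero => simp [Nat.doubleFactorial]
  | succ k =>
    have h1 : 2*(k+1)+1 = (2*k+1) + 2 := by ring
    have h2 : 2*(k+1)-1 = 2*k+1 := by omega
    rw [h1, Nat.doubleFactorial_add_two, h2]

lemma A_succ (k : ℕ) : A (k+1) = (2*k+1) * A k := by
  unfold A
  have h : 2*(k+1)-1 = 2*k+1 := by omega
  rw [h, odd_df]

lemma B_succ (k : ℕ) : B (k+1) = (2*k+3) * B k := by
  unfold B
  have h : 2*(k+1)+1 = (2*k+1)+2 := by ring
  rw [h, Nat.doubleFactorial_add_two]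

lemma pascal_conv (n : ℕ) (F : ℕ → ℕ → ℕ) :
    ∑ p ∈ range (n+2), (n+1).choose p * F p (n+1-p)
    = ∑ p ∈ range (n+1), n.choose p * (F p (n+1-p) + F (p+1) (n-p)) := by
  have key : (∑ p ∈ range (n+1), n.choose (p+1) * F (p+1) (n-p)) + F 0 (n+1)
      = ∑ p ∈ range (n+1), n.choose p * F p (n+1-p) := by
    have h1 := Finset.sum_range_succ' (fun p => n.choose p * F p (n+1-p)) (n+1)
    have h2 := Finset.sum_range_succ (fun p => n.choose p * F p (n+1-p)) (n+1)
    simp only [Nat.succ_sub_succ, Nat.choose_zero_right, one_mul, Nat.choose_succ_self,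
      zero_mul, add_zero, Nat.sub_zero] at h1 h2
    omega
  rw [Finset.sum_range_succ' (fun p => (n+1).choose p * F p (n+1-p)) (n+1)]
  have e : ∀ p ∈ range (n+1), (n+1).choose (p+1) * F (p+1) (n+1-(p+1))
      = n.choose p * F (p+1) (n-p) + n.choose (p+1) * F (p+1) (n-p) := by
    intro p _
    rw [Nat.choose_succ_succ, Nat.succ_sub_succ, add_mul]
  rw [Finset.sum_congr rfl e, Finset.sum_add_distrib]
  have e2 : ∀ p ∈ range (n+1), n.choose p * (F p (n+1-p) + F (p+1) (n-p))
      = n.choose p * F p (n+1-p) + n.choose p * F (p+1) (n-p) := by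
    intro p _; rw [mul_add]
  rw [Finset.sum_congr rfl e2, Finset.sum_add_distrib]
  simp only [Nat.choose_zero_right, one_mul, Nat.sub_zero]
  omega

lemma conv_A (n : ℕ) : ∑ p ∈ range (n+1), n.choose p * (A p * A (n-p)) = 2^n * n.factorial := by
  induction n with
  | zero => simp [A, Nat.doubleFactorial]
  | succ m ih =>
    rw [pascal_conv m (fun p q => A p * A q)]
    have e : ∀ p ∈ range (m+1), m.choose p * (A p * A (m+1-p) + A (p+1) * A (m-p))
        = (2*m+2) * (m.choose p * (A p * A (m-p))) := by
      intro p hp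
      have hp' : p ≤ m := Nat.lt_succ_iff.mp (mem_range.mp hp)
      have h1 : m+1-p = (m-p)+1 := by omega
      rw [h1, A_succ, A_succ p]
      have hs : (2*(m-p)+1) + (2*p+1) = 2*m+2 := by omega
      calc m.choose p * (A p * ((2*(m-p)+1) * A (m-p)) + (2*p+1) * A p * A (m-p))
          = ((2*(m-p)+1) + (2*p+1)) * (m.choose p * (A p * A (m-p))) := by ring
        _ = (2*m+2) * (m.choose p * (A p * A (m-p))) := by rw [hs]
    rw [Finset.sum_congr rfl e, ← Finset.mul_sum, ih, Nat.factorial_succ]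
    ring

lemma conv_B (n : ℕ) :
    2 * ∑ p ∈ range (n+1), n.choose p * (B p * B (n-p)) = 2^n * (n+2).factorial := by
  induction n with
  | zero => simp [B, Nat.doubleFactorial]
  | succ m ih =>
    rw [pascal_conv m (fun p q => B p * B q)]
    have e : ∀ p ∈ range (m+1), m.choose p * (B p * B (m+1-p) + B (p+1) * B (m-p))
        = (2*m+6) * (m.choose p * (B p * B (m-p))) := by
      intro p hp
      have hp' : p ≤ m := Nat.lt_succ_iff.mp (mem_range.mp hp)
      have h1 : m+1-p = (m-p)+1 := by omega
      rw [h1, B_succ, B_succ p]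
      have hs : (2*(m-p)+3) + (2*p+3) = 2*m+6 := by omega
      calc m.choose p * (B p * ((2*(m-p)+3) * B (m-p)) + (2*p+3) * B p * B (m-p))
          = ((2*(m-p)+3) + (2*p+3)) * (m.choose p * (B p * B (m-p))) := by ring
        _ = (2*m+6) * (m.choose p * (B p * B (m-p))) := by rw [hs]
    rw [Finset.sum_congr rfl e, ← Finset.mul_sum]
    have : 2 * ((2*m+6) * ∑ p ∈ range (m+1), m.choose p * (B p * B (m-p)))
        = (2*m+6) * (2 * ∑ p ∈ range (m+1), m.choose p * (B p * B (m-p))) := by ring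
    rw [this, ih]
    have hf : (m+1+2).factorial = (m+3) * (m+2).factorial := by
      rw [show m+1+2 = (m+2)+1 from rfl, Nat.factorial_succ]
    rw [hf]
    ring

lemma two_choose_two (m : ℕ) : 2 * m.choose 2 = m * (m-1) := by
  induction m with
  | zero => rfl
  | succ k ih =>
    rw [Nat.choose_succ_succ]
    simp only [Nat.choose_one_right, Nat.succ_sub_one]
    cases k with
    | zero => rfl
    | succ j => simp only [Nat.succ_sub_one] at ih; nlinarith [ih]

lemma six_choose_three (m : ℕ) : 6 * m.choose 3 = m * (m-1) * (m-2) := by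
  induction m with
  | zero => rfl
  | succ k ih =>
    rw [Nat.choose_succ_succ (k := 2)]
    have h2 := two_choose_two k
    rcases k with _ | _ | j
    · rfl
    · rfl
    · simp only [Nat.succ_sub_one] at *
      have e1 : j+1+1+1-2 = j+1 := by omega
      rw [e1]
      have e2 : j+1+1-2 = j := by omega
      rw [e2] at ih
      nlinarith [ih, h2]

lemma choose_four (m : ℕ) : 24 * m.choose 4 = m * (m-1) * (m-2) * (m-3) := by
  induction m with
  | zero => rfl
  | succ k ih =>
    rw [Nat.choose_succ_succ (k := 3)]
    have h3 := six_choose_three k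
    rcases k with _ | _ | _ | j
    · rfl
    · rfl
    · rfl
    · have e1 : j+1+1+1+1-2 = j+2 := by omega
      have e2 : j+1+1+1+1-3 = j+1 := by omega
      have e3 : j+1+1+1-2 = j+1 := by omega
      have e4 : j+1+1+1-3 = j := by omega
      simp only [Nat.succ_sub_one, e1, e2, e3, e4] at *
      nlinarith [ih, h3]

lemma choose_two_of_two_mul (k : ℕ) : (2*k).choose 2 = k * (2*k-1) := by
  have h := two_choose_two (2*k)
  have h2 : 2 * ((2*k).choose 2) = 2 * (k * (2*k-1)) := by rw [h, ← mul_assoc]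
  omega

lemma scal (p q : ℕ) :
    (2*p*(p-1) + 2*(q+1)*q + 6*p*(q+1)) * (2*q+1)
      + (2*(p+1)*p + 2*q*(q-1) + 6*(p+1)*q) * (2*p+1)
    = (2*(p+q)+6) * (2*p*(p-1) + 2*q*(q-1) + 6*p*q) + 18*(p+q) := by
  rcases p with _ | p <;> rcases q with _ | q <;>
    simp only [Nat.zero_sub, Nat.succ_sub_one, Nat.mul_zero, Nat.zero_mul] <;> ring

lemma conv_W (n : ℕ) :
    4 * ∑ p ∈ range (n+1), n.choose p *
        ((2*p*(p-1) + 2*(n-p)*(n-p-1) + 6*p*(n-p)) * (A p * A (n-p)))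
      = 9*n*(n-1)*(2^n * n.factorial) := by
  induction n with
  | zero => simp
  | succ m ih =>
    rw [pascal_conv m (fun p q => (2*p*(p-1) + 2*q*(q-1) + 6*p*q) * (A p * A q))]
    have e : ∀ p ∈ range (m+1),
        m.choose p * ((2*p*(p-1) + 2*(m+1-p)*((m+1-p)-1) + 6*p*(m+1-p)) * (A p * A (m+1-p))
          + (2*(p+1)*((p+1)-1) + 2*(m-p)*((m-p)-1) + 6*(p+1)*(m-p)) * (A (p+1) * A (m-p)))
        = (2*m+6) * (m.choose p * ((2*p*(p-1) + 2*(m-p)*((m-p)-1) + 6*p*(m-p)) * (A p * A (m-p))))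
          + 18*m * (m.choose p * (A p * A (m-p))) := by
      intro p hp
      have hp' : p ≤ m := Nat.lt_succ_iff.mp (mem_range.mp hp)
      have h1 : m+1-p = (m-p)+1 := by omega
      have h2 : (m-p)+1-1 = m-p := by omega
      rw [h1, h2, A_succ, A_succ p]
      have hs := scal p (m-p)
      have hpq : p + (m-p) = m := by omega
      rw [hpq] at hs
      calc m.choose p * ((2*p*(p-1) + 2*((m-p)+1)*(m-p) + 6*p*((m-p)+1)) * (A p * ((2*(m-p)+1) * A (m-p)))
            + (2*(p+1)*(p+1-1) + 2*(m-p)*((m-p)-1) + 6*(p+1)*(m-p)) * ((2*p+1) * A p * A (m-p)))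
          = m.choose p * (((2*p*(p-1) + 2*((m-p)+1)*(m-p) + 6*p*((m-p)+1)) * (2*(m-p)+1)
            + (2*(p+1)*p + 2*(m-p)*((m-p)-1) + 6*(p+1)*(m-p)) * (2*p+1)) * (A p * A (m-p))) := by
            simp only [Nat.add_sub_cancel]; ring
        _ = m.choose p * (((2*m+6) * (2*p*(p-1) + 2*(m-p)*((m-p)-1) + 6*p*(m-p)) + 18*m) * (A p * A (m-p))) := by
            rw [hs]
        _ = (2*m+6) * (m.choose p * ((2*p*(p-1) + 2*(m-p)*((m-p)-1) + 6*p*(m-p)) * (A p * A (m-p))))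
            + 18*m * (m.choose p * (A p * A (m-p))) := by ring
    rw [Finset.sum_congr rfl e, Finset.sum_add_distrib, ← Finset.mul_sum, ← Finset.mul_sum]
    rw [mul_add]
    have h4 : 4 * ((2*m+6) * ∑ p ∈ range (m+1), m.choose p *
        ((2*p*(p-1) + 2*(m-p)*((m-p)-1) + 6*p*(m-p)) * (A p * A (m-p))))
        = (2*m+6) * (4 * ∑ p ∈ range (m+1), m.choose p *
        ((2*p*(p-1) + 2*(m-p)*((m-p)-1) + 6*p*(m-p)) * (A p * A (m-p)))) := by ring
    rw [h4, ih, conv_A]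
    have hf : (m+1).factorial = (m+1) * m.factorial := Nat.factorial_succ m
    rw [hf]
    rcases m with _ | j
    · simp
    · simp only [Nat.succ_sub_one]
      ring

lemma key_t3 (q : ℕ) : (2*q).choose 2 * Nat.doubleFactorial (2*(q-1)-1) = q * A q := by
  cases q with
  | zero => simp
  | succ k =>
    have hc : (2*(k+1)).choose 2 = (k+1)*(2*k+1) := by
      rw [choose_two_of_two_mul, show 2*(k+1)-1 = 2*k+1 by omega]
    have he : 2*((k+1)-1)-1 = 2*k-1 := by omega
    rw [hc, he, A_succ]
    show (k+1)*(2*k+1) * A k = (k+1) * ((2*k+1) * A k)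
    ring

lemma key_t5 (p : ℕ) : 6 * ((2*p).choose 4) * Nat.doubleFactorial (2*(p-2)-1)
    = p * (p-1) * A p := by
  rcases p with _ | _ | k
  · simp
  · simp [Nat.choose_eq_zero_of_lt]
  · have h24 : 24 * ((2*(k+2)).choose 4) = (2*k+4) * (2*k+3) * (2*k+2) * (2*k+1) := by
      have h := choose_four (2*(k+2))
      have e0 : 2*(k+2) = 2*k+4 := by ring
      have e1 : 2*(k+2)-1 = 2*k+3 := by omega
      have e2 : 2*(k+2)-2 = 2*k+2 := by omega
      have e3 : 2*(k+2)-3 = 2*k+1 := by omega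
      rw [e1, e2, e3, e0] at h
      exact h
    have hc : 6 * ((2*(k+2)).choose 4) = (k+2)*(k+1)*((2*k+3)*(2*k+1)) := by
      have h4 : 4 * (6 * ((2*(k+2)).choose 4)) = 4 * ((k+2)*(k+1)*((2*k+3)*(2*k+1))) := by
        calc 4 * (6 * ((2*(k+2)).choose 4)) = 24 * ((2*(k+2)).choose 4) := by ring
          _ = (2*k+4) * (2*k+3) * (2*k+2) * (2*k+1) := h24
          _ = 4 * ((k+2)*(k+1)*((2*k+3)*(2*k+1))) := by ring
      exact Nat.eq_of_mul_eq_mul_left (by norm_num) h4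
    have he : 2*((k+2)-2)-1 = 2*k-1 := by omega
    rw [hc, he]
    have hA : A (k+2) = (2*(k+1)+1) * ((2*k+1) * A k) := by rw [A_succ, A_succ]
    show (k+2)*(k+1)*((2*k+3)*(2*k+1)) * A k = (k+2) * ((k+2)-1) * A (k+2)
    rw [hA]
    have : (k+2)-1 = k+1 := rfl
    rw [this]
    ring

lemma bracket (p q : ℕ) :
    2 * Nat.choose p 2 * Nat.doubleFactorial (2*p-1) * Nat.doubleFactorial (2*q-1)
    + 2 * Nat.choose q 2 * Nat.doubleFactorial (2*p-1) * Nat.doubleFactorial (2*q-1)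
    + 2 * p * Nat.choose (2*q) 2 * Nat.doubleFactorial (2*p-1) * Nat.doubleFactorial (2*(q-1)-1)
    + 2 * q * Nat.choose (2*p) 2 * Nat.doubleFactorial (2*(p-1)-1) * Nat.doubleFactorial (2*q-1)
    + 6 * Nat.choose (2*p) 4 * Nat.doubleFactorial (2*(p-2)-1) * Nat.doubleFactorial (2*q-1)
    + 6 * Nat.choose (2*q) 4 * Nat.doubleFactorial (2*p-1) * Nat.doubleFactorial (2*(q-2)-1)
    + 2 * Nat.choose (2*p) 2 * Nat.choose (2*q) 2 * Nat.doubleFactorial (2*(p-1)-1) *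
        Nat.doubleFactorial (2*(q-1)-1)
    = (2*p*(p-1) + 2*q*(q-1) + 6*p*q) * (A p * A q) := by
  have hAp : Nat.doubleFactorial (2*p-1) = A p := rfl
  have hAq : Nat.doubleFactorial (2*q-1) = A q := rfl
  have t1 : 2 * Nat.choose p 2 * A p * A q = p*(p-1) * (A p * A q) := by
    rw [show 2 * Nat.choose p 2 * A p * A q = (2 * Nat.choose p 2) * (A p * A q) by ring,
      two_choose_two]
  have t2 : 2 * Nat.choose q 2 * A p * A q = q*(q-1) * (A p * A q) := by
    rw [show 2 * Nat.choose q 2 * A p * A q = (2 * Nat.choose q 2) * (A p * A q) by ring,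
      two_choose_two]
  have t3 : 2 * p * Nat.choose (2*q) 2 * A p * Nat.doubleFactorial (2*(q-1)-1)
      = 2*p*q * (A p * A q) := by
    rw [show 2 * p * Nat.choose (2*q) 2 * A p * Nat.doubleFactorial (2*(q-1)-1)
      = 2 * p * A p * (Nat.choose (2*q) 2 * Nat.doubleFactorial (2*(q-1)-1)) by ring,
      key_t3]
    ring
  have t4 : 2 * q * Nat.choose (2*p) 2 * Nat.doubleFactorial (2*(p-1)-1) * A q
      = 2*p*q * (A p * A q) := by
    rw [show 2 * q * Nat.choose (2*p) 2 * Nat.doubleFactorial (2*(p-1)-1) * A q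
      = 2 * q * A q * (Nat.choose (2*p) 2 * Nat.doubleFactorial (2*(p-1)-1)) by ring,
      key_t3]
    ring
  have t5 : 6 * Nat.choose (2*p) 4 * Nat.doubleFactorial (2*(p-2)-1) * A q
      = p*(p-1) * (A p * A q) := by
    rw [show 6 * Nat.choose (2*p) 4 * Nat.doubleFactorial (2*(p-2)-1) * A q
      = (6 * Nat.choose (2*p) 4 * Nat.doubleFactorial (2*(p-2)-1)) * A q by ring,
      key_t5]
    ring
  have t6 : 6 * Nat.choose (2*q) 4 * A p * Nat.doubleFactorial (2*(q-2)-1)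
      = q*(q-1) * (A p * A q) := by
    rw [show 6 * Nat.choose (2*q) 4 * A p * Nat.doubleFactorial (2*(q-2)-1)
      = (6 * Nat.choose (2*q) 4 * Nat.doubleFactorial (2*(q-2)-1)) * A p by ring,
      key_t5]
    ring
  have t7 : 2 * Nat.choose (2*p) 2 * Nat.choose (2*q) 2 * Nat.doubleFactorial (2*(p-1)-1) *
      Nat.doubleFactorial (2*(q-1)-1) = 2*p*q * (A p * A q) := by
    rw [show 2 * Nat.choose (2*p) 2 * Nat.choose (2*q) 2 * Nat.doubleFactorial (2*(p-1)-1) *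
        Nat.doubleFactorial (2*(q-1)-1)
      = 2 * (Nat.choose (2*p) 2 * Nat.doubleFactorial (2*(p-1)-1)) *
        (Nat.choose (2*q) 2 * Nat.doubleFactorial (2*(q-1)-1)) by ring,
      key_t3, key_t3]
    ring
  rw [hAp, hAq, t1, t2, t3, t4, t5, t6, t7]
  ring

theorem stmt12 (n : ℕ) (hn : 0 < n) :
    (∑ p ∈ range (n + 1), Nat.choose n p *
        (2 * Nat.choose p 2 * Nat.doubleFactorial (2 * p - 1) *
            Nat.doubleFactorial (2 * (n - p) - 1)
          + 2 * Nat.choose (n - p) 2 * Nat.doubleFactorial (2 * p - 1) *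
            Nat.doubleFactorial (2 * (n - p) - 1)
          + 2 * p * Nat.choose (2 * (n - p)) 2 * Nat.doubleFactorial (2 * p - 1) *
            Nat.doubleFactorial (2 * (n - p - 1) - 1)
          + 2 * (n - p) * Nat.choose (2 * p) 2 * Nat.doubleFactorial (2 * (p - 1) - 1) *
            Nat.doubleFactorial (2 * (n - p) - 1)
          + 6 * Nat.choose (2 * p) 4 * Nat.doubleFactorial (2 * (p - 2) - 1) *
            Nat.doubleFactorial (2 * (n - p) - 1)
          + 6 * Nat.choose (2 * (n - p)) 4 * Nat.doubleFactorial (2 * p - 1) *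
            Nat.doubleFactorial (2 * (n - p - 2) - 1)
          + 2 * Nat.choose (2 * p) 2 * Nat.choose (2 * (n - p)) 2 *
            Nat.doubleFactorial (2 * (p - 1) - 1) * Nat.doubleFactorial (2 * (n - p - 1) - 1)))
    + (∑ p ∈ range n, 2 * n * Nat.choose (n - 1) p * (2 * p + 1) * (2 * (n - p - 1) + 1) *
        Nat.doubleFactorial (2 * p - 1) * Nat.doubleFactorial (2 * (n - p - 1) - 1))
    + (∑ p ∈ range (n - 1), 4 * Nat.choose n 2 * Nat.choose (n - 2) p *
        Nat.doubleFactorial (2 * p + 1) * Nat.doubleFactorial (2 * (n - p - 2) + 1))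
    = 2 ^ n * n.factorial * (3 * n - 2) * n := by
  rcases Nat.lt_or_ge n 2 with hlt | hge
  · interval_cases n
    decide
  · obtain ⟨k, rfl⟩ : ∃ k, n = k + 2 := ⟨n - 2, by omega⟩
    have e1 : (∑ p ∈ range (k + 2 + 1), Nat.choose (k + 2) p *
        (2 * Nat.choose p 2 * Nat.doubleFactorial (2 * p - 1) *
            Nat.doubleFactorial (2 * (k + 2 - p) - 1)
          + 2 * Nat.choose (k + 2 - p) 2 * Nat.doubleFactorial (2 * p - 1) *
            Nat.doubleFactorial (2 * (k + 2 - p) - 1)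
          + 2 * p * Nat.choose (2 * (k + 2 - p)) 2 * Nat.doubleFactorial (2 * p - 1) *
            Nat.doubleFactorial (2 * (k + 2 - p - 1) - 1)
          + 2 * (k + 2 - p) * Nat.choose (2 * p) 2 * Nat.doubleFactorial (2 * (p - 1) - 1) *
            Nat.doubleFactorial (2 * (k + 2 - p) - 1)
          + 6 * Nat.choose (2 * p) 4 * Nat.doubleFactorial (2 * (p - 2) - 1) *
            Nat.doubleFactorial (2 * (k + 2 - p) - 1)
          + 6 * Nat.choose (2 * (k + 2 - p)) 4 * Nat.doubleFactorial (2 * p - 1) *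
            Nat.doubleFactorial (2 * (k + 2 - p - 2) - 1)
          + 2 * Nat.choose (2 * p) 2 * Nat.choose (2 * (k + 2 - p)) 2 *
            Nat.doubleFactorial (2 * (p - 1) - 1) * Nat.doubleFactorial (2 * (k + 2 - p - 1) - 1)))
        = ∑ p ∈ range (k + 2 + 1), Nat.choose (k + 2) p *
            ((2 * p * (p - 1) + 2 * (k + 2 - p) * (k + 2 - p - 1) + 6 * p * (k + 2 - p)) *
              (A p * A (k + 2 - p))) :=
      Finset.sum_congr rfl fun p _ => by rw [bracket p (k + 2 - p)]
    have e2 : ∀ p ∈ range (k + 2),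
        2 * (k + 2) * Nat.choose (k + 2 - 1) p * (2 * p + 1) * (2 * (k + 2 - p - 1) + 1) *
          Nat.doubleFactorial (2 * p - 1) * Nat.doubleFactorial (2 * (k + 2 - p - 1) - 1)
        = (k + 2) * (2 * (Nat.choose (k + 1) p * (B p * B (k + 1 - p)))) := by
      intro p hp
      have hq : k + 2 - p - 1 = k + 1 - p := by omega
      have hc : k + 2 - 1 = k + 1 := rfl
      rw [hq, hc]
      have hb1 : B p = (2 * p + 1) * Nat.doubleFactorial (2 * p - 1) := odd_df p
      have hb2 : B (k + 1 - p) = (2 * (k + 1 - p) + 1) *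
          Nat.doubleFactorial (2 * (k + 1 - p) - 1) := odd_df _
      rw [hb1, hb2]
      ring
    have h2 : (∑ p ∈ range (k + 2),
        2 * (k + 2) * Nat.choose (k + 2 - 1) p * (2 * p + 1) * (2 * (k + 2 - p - 1) + 1) *
          Nat.doubleFactorial (2 * p - 1) * Nat.doubleFactorial (2 * (k + 2 - p - 1) - 1))
        = (k + 2) * (2 ^ (k + 1) * (k + 1 + 2).factorial) := by
      rw [Finset.sum_congr rfl e2, ← Finset.mul_sum, ← Finset.mul_sum,
        show range (k + 2) = range (k + 1 + 1) from rfl, conv_B (k + 1)]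
    have e3 : ∀ p ∈ range (k + 1),
        4 * Nat.choose (k + 2) 2 * Nat.choose (k + 2 - 2) p *
          Nat.doubleFactorial (2 * p + 1) * Nat.doubleFactorial (2 * (k + 2 - p - 2) + 1)
        = (2 * Nat.choose (k + 2) 2) * (2 * (Nat.choose k p * (B p * B (k - p)))) := by
      intro p hp
      have hq : k + 2 - p - 2 = k - p := by omega
      rw [hq]
      show 4 * Nat.choose (k + 2) 2 * Nat.choose k p * B p * B (k - p) = _
      ring
    have h3 : (∑ p ∈ range (k + 2 - 1),
        4 * Nat.choose (k + 2) 2 * Nat.choose (k + 2 - 2) p *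
          Nat.doubleFactorial (2 * p + 1) * Nat.doubleFactorial (2 * (k + 2 - p - 2) + 1))
        = (k + 2) * (k + 1) * (2 ^ k * (k + 2).factorial) := by
      rw [show k + 2 - 1 = k + 1 from rfl, Finset.sum_congr rfl e3, ← Finset.mul_sum,
        ← Finset.mul_sum, conv_B k]
      have ht : 2 * Nat.choose (k + 2) 2 = (k + 2) * (k + 1) := by
        rw [two_choose_two, show k + 2 - 1 = k + 1 from rfl]
      rw [ht, mul_assoc]
    refine Nat.eq_of_mul_eq_mul_left (show 0 < 4 by norm_num) ?_
    rw [e1, Nat.mul_add, Nat.mul_add, conv_W (k + 2), h2, h3]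
    rw [show k + 2 - 1 = k + 1 from rfl, show 3 * (k + 2) - 2 = 3 * k + 4 by omega,
      show (k + 1 + 2).factorial = (k + 3) * (k + 2).factorial from by
        rw [show k + 1 + 2 = (k + 2) + 1 by omega, Nat.factorial_succ]]
    ring
end

section
/- For a k x 2n complex matrix X with i.i.d. standard complex Gaussian entries and k=1 (i.e., X is a 1 x 2n row vector), the expectation of |Haf(X^T X)|^4 equals ((2n-1)!!)^4 * 4^n. -/
open MeasureTheory ProbabilityTheory Matrix

/-- Standard complex Gaussian (mean 0, unit variance `E[|x|²] = 1`):
real and imaginary parts independent real Gaussians of variance 1/2. -/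
noncomputable def complexGaussian : Measure ℂ :=
  ((gaussianReal 0 (1 / 2)).prod (gaussianReal 0 (1 / 2))).map
    Complex.measurableEquivRealProd.symm

instance : IsProbabilityMeasure complexGaussian :=
  Measure.isProbabilityMeasure_map Complex.measurableEquivRealProd.symm.measurable.aemeasurable

/-- i.i.d. standard complex Gaussian entries for a `k × m` array. -/
noncomputable def gaussianEnsemble (k m : ℕ) : Measure (Fin k → Fin m → ℂ) :=
  Measure.pi fun _ : Fin k => Measure.pi fun _ : Fin m => complexGaussian

/-- The hafnian of a `2n × 2n` matrix:
`Haf(A) = (1/(n! 2ⁿ)) ∑_{σ ∈ S_{2n}} ∏_{j=1}^{n} A_{σ(2j-1), σ(2j)}`. -/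
noncomputable def haf {n : ℕ} (A : Matrix (Fin (2 * n)) (Fin (2 * n)) ℂ) : ℂ :=
  (1 / ((n.factorial : ℂ) * 2 ^ n)) *
    ∑ σ : Equiv.Perm (Fin (2 * n)), ∏ j : Fin n,
      A (σ ⟨2 * j.val, by have := j.isLt; omega⟩)
        (σ ⟨2 * j.val + 1, by have := j.isLt; omega⟩)

/-! Since `XᵀX = xᵀx` has rank one, each of the `(2n)!` terms of the hafnian equals `∏ xᵢ`, so
`Haf(XᵀX) = (2n-1)‼ ∏ xᵢ`. The fourth moment of the modulus then factorises over the independent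
entries, and `E|z|⁴ = E(a² + b²)² = 2 E a⁴ + 2 (E a²)² = 2` for a standard complex Gaussian
`z = a + bi`, by the moments `E a^(2k) = (2k-1)‼ vᵏ` of `N(0, v)`, here with `v = 1/2`. -/

open Finset Real
open scoped Nat NNReal

lemma Fin.prod_pairs_eq_prod {M : Type*} [CommMonoid M] {n : ℕ} (f : Fin (2 * n) → M) :
    ∏ j : Fin n, f ⟨2 * j, by omega⟩ * f ⟨2 * j + 1, by omega⟩ = ∏ i, f i := by
  rw [← (finProdFinEquiv.trans (finCongr (Nat.mul_comm n 2))).prod_comp, Fintype.prod_prod_type]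
  refine prod_congr rfl fun j _ => ?_
  rw [Fin.prod_univ_two]
  congr 2 <;> ext <;> simp [finProdFinEquiv, mul_comm, add_comm]

lemma Nat.factorial_two_mul_eq_doubleFactorial_mul (n : ℕ) :
    (2 * n)! = (2 * n - 1)‼ * (n ! * 2 ^ n) := by
  cases n with
  | zero => rfl
  | succ m =>
    rw [show 2 * (m + 1) = 2 * m + 1 + 1 by ring, Nat.factorial_eq_mul_doubleFactorial,
      show 2 * m + 1 + 1 = 2 * (m + 1) by ring, Nat.doubleFactorial_two_mul,
      show 2 * (m + 1) - 1 = 2 * m + 1 by omega]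
    ring

theorem haf_vecMulVec_self {n : ℕ} (x : Fin (2 * n) → ℂ) :
    haf (vecMulVec x x) = (2 * n - 1)‼ * ∏ i, x i := by
  have hterm (σ : Equiv.Perm (Fin (2 * n))) :
      ∏ j : Fin n, vecMulVec x x (σ ⟨2 * j, by omega⟩) (σ ⟨2 * j + 1, by omega⟩) = ∏ i, x i := by
    simp only [vecMulVec_apply]
    exact (Fin.prod_pairs_eq_prod (x ∘ σ)).trans (Equiv.prod_comp σ x)
  have hcount : ((2 * n)! : ℂ) = (2 * n - 1)‼ * (n ! * 2 ^ n) := by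
    exact_mod_cast Nat.factorial_two_mul_eq_doubleFactorial_mul n
  rw [haf, sum_congr rfl fun σ _ => hterm σ, sum_const, card_univ, Fintype.card_perm,
    Fintype.card_fin, nsmul_eq_mul, hcount]
  have : (n ! : ℂ) ≠ 0 := by exact_mod_cast n.factorial_ne_zero
  field_simp

lemma Matrix.transpose_mul_self_of_fin_one {R : Type*} [NonUnitalNonAssocSemiring R] {m : ℕ}
    (X : Fin 1 → Fin m → R) :
    (of X)ᵀ * of X = vecMulVec (X 0) (X 0) := by
  ext i j
  simp [mul_apply, vecMulVec_apply]

lemma integral_pow_two_mul_mul_exp_neg_sq (k : ℕ) :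
    ∫ x : ℝ, x ^ (2 * k) * exp (-x ^ 2) = (2 * k - 1 : ℕ)‼ * √π / 2 ^ k := by
  have habs : (fun x : ℝ => x ^ (2 * k) * exp (-x ^ 2))
      = fun x => |x| ^ (2 * k) * exp (-|x| ^ 2) := by
    funext x
    rw [Even.pow_abs ⟨k, by ring⟩, sq_abs]
  have hrpow : ∫ x in Set.Ioi 0, x ^ (2 * k) * exp (-x ^ 2)
      = ∫ x in Set.Ioi 0, x ^ ((2 * k : ℕ) : ℝ) * exp (-x ^ (2 : ℝ)) :=
    setIntegral_congr_fun measurableSet_Ioi fun x _ => by rw [rpow_natCast, rpow_two]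
  rw [habs, integral_comp_abs (f := fun x => x ^ (2 * k) * exp (-x ^ 2)), hrpow,
    integral_rpow_mul_exp_neg_rpow two_pos (by linarith [(2 * k : ℕ).cast_nonneg (α := ℝ)]),
    show (((2 * k : ℕ) : ℝ) + 1) / 2 = k + 1 / 2 by push_cast; ring, Gamma_nat_add_half]
  ring

lemma integral_pow_two_mul_gaussianReal_half (k : ℕ) :
    ∫ x, x ^ (2 * k) ∂gaussianReal 0 (1 / 2) = (2 * k - 1 : ℕ)‼ / 2 ^ k := by
  have hpdf (x : ℝ) : gaussianPDFReal 0 (1 / 2) x = (√π)⁻¹ * exp (-x ^ 2) := by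
    rw [gaussianPDFReal]
    norm_num
    field_simp
  simp_rw [integral_gaussianReal_eq_integral_smul (by norm_num : (1 / 2 : ℝ≥0) ≠ 0), hpdf,
    smul_eq_mul, mul_assoc, integral_const_mul, mul_comm (exp _),
    integral_pow_two_mul_mul_exp_neg_sq]
  have : √π ≠ 0 := by positivity
  field_simp

lemma integral_pow_two_mul_gaussianReal (v : ℝ≥0) (k : ℕ) :
    ∫ x, x ^ (2 * k) ∂gaussianReal 0 v = v ^ k * (2 * k - 1 : ℕ)‼ := by
  have hmap : (gaussianReal 0 (1 / 2)).map (√(2 * v) * ·) = gaussianReal 0 v := by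
    rw [gaussianReal_map_const_mul, mul_zero]
    congr 1
    ext
    rw [NNReal.coe_mul, NNReal.coe_mk, sq_sqrt (by positivity)]
    push_cast
    ring
  have hscale (x : ℝ) : (√(2 * v) * x) ^ (2 * k) = (2 * v) ^ k * x ^ (2 * k) := by
    rw [mul_pow, pow_mul, sq_sqrt (by positivity)]
  rw [← hmap, integral_map (by fun_prop) (by fun_prop)]
  simp_rw [hscale]
  rw [integral_const_mul, integral_pow_two_mul_gaussianReal_half, mul_pow]
  field_simp

lemma integrable_pow_gaussianReal (μ : ℝ) (v : ℝ≥0) (n : ℕ) :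
    Integrable (fun x => x ^ n) (gaussianReal μ v) :=
  integrable_pow_of_mem_interior_integrableExpSet (X := fun x => x)
    (by simp [integrableExpSet_fun_id_gaussianReal]) n

lemma integral_sq_add_sq_sq_prod (P : Measure ℝ) [IsProbabilityMeasure P]
    (h2 : Integrable (fun x => x ^ 2) P) (h4 : Integrable (fun x => x ^ 4) P) :
    ∫ p : ℝ × ℝ, (p.1 ^ 2 + p.2 ^ 2) ^ 2 ∂P.prod P
      = 2 * ∫ x, x ^ 4 ∂P + 2 * (∫ x, x ^ 2 ∂P) ^ 2 := by
  have hexpand : (fun p : ℝ × ℝ => (p.1 ^ 2 + p.2 ^ 2) ^ 2)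
      = fun p => p.1 ^ 4 + 2 * (p.1 ^ 2 * p.2 ^ 2) + p.2 ^ 4 := by
    funext p
    ring
  have hfst : Integrable (fun p : ℝ × ℝ => p.1 ^ 4) (P.prod P) := h4.comp_fst P
  have hmixed : Integrable (fun p : ℝ × ℝ => 2 * (p.1 ^ 2 * p.2 ^ 2)) (P.prod P) :=
    (h2.mul_prod h2).const_mul 2
  have hfst_mixed : Integrable (fun p : ℝ × ℝ => p.1 ^ 4 + 2 * (p.1 ^ 2 * p.2 ^ 2)) (P.prod P) :=
    hfst.add hmixed
  rw [hexpand, integral_add hfst_mixed (h4.comp_snd P), integral_add hfst hmixed,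
    integral_const_mul, integral_fun_fst (fun x => x ^ 4),
    integral_prod_mul (fun x => x ^ 2) (fun x => x ^ 2), integral_fun_snd (fun x => x ^ 4)]
  simp only [probReal_univ, smul_eq_mul, one_mul]
  ring

lemma integral_norm_pow_four_complexGaussian : ∫ z, ‖z‖ ^ 4 ∂complexGaussian = 2 := by
  have hnorm (p : ℝ × ℝ) :
      ‖Complex.measurableEquivRealProd.symm p‖ ^ 4 = (p.1 ^ 2 + p.2 ^ 2) ^ 2 := by
    rw [show 4 = 2 * 2 by rfl, pow_mul, Complex.sq_norm,
      Complex.measurableEquivRealProd_symm_apply, Complex.normSq_mk]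
    ring
  have hmoment2 := integral_pow_two_mul_gaussianReal (1 / 2) 1
  have hmoment4 := integral_pow_two_mul_gaussianReal (1 / 2) 2
  norm_num at hmoment2 hmoment4
  rw [complexGaussian, integral_map_equiv]
  simp_rw [hnorm]
  rw [integral_sq_add_sq_sq_prod _ (integrable_pow_gaussianReal 0 _ 2)
    (integrable_pow_gaussianReal 0 _ 4), hmoment2, hmoment4]
  norm_num

/-- For `k = 1`, `E[|Haf(XᵀX)|⁴] = ((2n-1)!!)⁴ 4ⁿ`. -/
theorem stmt13 (n : ℕ) :
    (∫ X : Fin 1 → Fin (2 * n) → ℂ,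
        ‖haf ((Matrix.of X)ᵀ * Matrix.of X)‖ ^ 4
      ∂(gaussianEnsemble 1 (2 * n)))
    = (Nat.doubleFactorial (2 * n - 1) : ℝ) ^ 4 * 4 ^ n := by
  set c : ℝ := (Nat.doubleFactorial (2 * n - 1) : ℝ)
  have hpoint (X : Fin 1 → Fin (2 * n) → ℂ) :
      ‖haf ((of X)ᵀ * of X)‖ ^ 4 = c ^ 4 * ∏ j, ‖X 0 j‖ ^ 4 := by
    rw [Matrix.transpose_mul_self_of_fin_one, haf_vecMulVec_self, norm_mul, norm_prod,
      Complex.norm_natCast, mul_pow, prod_pow]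
  calc _ = ∫ X : Fin 1 → Fin (2 * n) → ℂ, ∏ i : Fin 1, c ^ 4 * ∏ j, ‖X i j‖ ^ 4
        ∂gaussianEnsemble 1 (2 * n) := by simp_rw [hpoint, Fin.prod_univ_one]
    _ = c ^ 4 * (∫ z, ‖z‖ ^ 4 ∂complexGaussian) ^ (2 * n) := by
      rw [gaussianEnsemble,
        integral_fintype_prod_eq_pow (fun y : Fin (2 * n) → ℂ => c ^ 4 * ∏ j, ‖y j‖ ^ 4),
        integral_const_mul, integral_fintype_prod_eq_pow (fun z : ℂ => ‖z‖ ^ 4),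
        Fintype.card_fin, Fintype.card_fin, pow_one]
    _ = c ^ 4 * 4 ^ n := by
      rw [integral_norm_pow_four_complexGaussian, pow_mul]
      norm_num
end

section
/- Let g(n) = sum over graphs G in G^1_n of k^{C(G)}, where G^1_n is the set of graphs on 2n vertices O_1,...,O_{2n} with a fixed perfect matching {(O_{2j-1},O_{2j}) : j in [n]} of black edges together with an arbitrary perfect matching of red edges, and C(G) is the number of connected components. Then g(n) satisfies the recursion g(n) = (k + 2(n-1)) * g(n-1) with g(0)=1, and hence g(n) = k(k+2)...(k+2n-2). -/
/-!
Replace `k ^ C(G)` by the number of `k`-colourings of the vertices that are constant along black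
and red edges, and count pairs (red matching, colouring). Fix a black edge `{a, β a}`. If the red
partner of `a` is `β a`, this edge is a component on its own: its colour is free and the rest is an
instance on `2n - 2` vertices, which gives `k * g(n-1)`. Otherwise the red partner `m` of `a` is one
of the `2n - 2` remaining vertices. As `m` and `β a` have the same colour, swapping them keeps the
colouring admissible and makes `{a, β a}` a red edge; deleting it contracts the path
`m - a - β a - σ (β a)` into one red edge, which gives `(2n - 2) * g(n-1)`.
-/


open Finset

/-- The fixed (black) perfect matching pairing `O_{2j-1}` with `O_{2j}`,
i.e. vertex `2j` with vertex `2j+1` in 0-indexed form. -/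
def blackPartner (n : ℕ) (v : Fin (2 * n)) : Fin (2 * n) :=
  ⟨if v.val % 2 = 0 then v.val + 1 else v.val - 1, by have := v.isLt; split <;> omega⟩

/-- The graph on `2n` vertices formed by the fixed black perfect matching together with the
red perfect matching given by the fixed-point-free involution `σ`. -/
def matchingGraph (n : ℕ) (σ : Equiv.Perm (Fin (2 * n))) : SimpleGraph (Fin (2 * n)) :=
  SimpleGraph.fromRel (fun v w => blackPartner n v = w ∨ σ v = w)

/-- `g(n) = ∑_{G ∈ 𝔾¹_n} k^{C(G)}`, the sum over all red perfect matchings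
(fixed-point-free involutions) of `k` to the number of connected components. -/
noncomputable def gFun (k n : ℕ) : ℕ :=
  ∑ σ ∈ Finset.univ.filter
      (fun σ : Equiv.Perm (Fin (2 * n)) => (∀ v, σ (σ v) = v) ∧ ∀ v, σ v ≠ v),
    k ^ Nat.card (matchingGraph n σ).ConnectedComponent

open Function

lemma apply_swap_eq_of_apply_eq {V α : Type*} [DecidableEq V] {f : V → α} {x y : V}
    (h : f x = f y) (v : V) : f (Equiv.swap x y v) = f v := by
  rw [Equiv.swap_apply_def]
  split_ifs with hx hy
  · rw [hx, h]
  · rw [hy, h]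
  · rfl

namespace SimpleGraph

variable {V α : Type*}

lemma Walk.apply_eq_of_forall_adj {G : SimpleGraph V} {f : V → α}
    (hf : ∀ v w, G.Adj v w → f v = f w) {u v : V} (p : G.Walk u v) : f u = f v := by
  induction p with
  | nil => rfl
  | cons h _ ih => exact (hf _ _ h).trans ih

def componentFunEquiv (G : SimpleGraph V) (α : Type*) :
    (G.ConnectedComponent → α) ≃ {f : V → α // ∀ v w, G.Adj v w → f v = f w} where
  toFun g := ⟨fun v => g (G.connectedComponentMk v), fun _ _ h =>
    congrArg g (ConnectedComponent.connectedComponentMk_eq_of_adj h)⟩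
  invFun f := ConnectedComponent.lift f.1 fun _ _ p _ => p.apply_eq_of_forall_adj f.2
  left_inv _ := funext fun C => C.ind fun _ => rfl
  right_inv _ := rfl

lemma card_forall_adj_imp_eq [Finite V] (G : SimpleGraph V) (α : Type*) :
    Nat.card {f : V → α // ∀ v w, G.Adj v w → f v = f w} =
      Nat.card α ^ Nat.card G.ConnectedComponent := by
  rw [← Nat.card_congr (componentFunEquiv G α), Nat.card_fun]

lemma forall_fromRel_adj_imp_iff {r : V → V → Prop} {f : V → α} :
    (∀ v w, (fromRel r).Adj v w → f v = f w) ↔ ∀ v w, r v w → f v = f w := by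
  simp only [fromRel_adj]
  refine ⟨fun h v w hvw => ?_, fun h v w ⟨_, hvw⟩ => hvw.elim (h v w) fun hwv => (h w v hwv).symm⟩
  by_cases hne : v = w
  · rw [hne]
  · exact h v w ⟨hne, Or.inl hvw⟩

end SimpleGraph

variable {V : Type*}

/-- For a fixed red matching there are `k ^ C(G)` admissible colourings, so `gFun` counts these
pairs. -/
@[ext]
structure ColoredMatching (β : V → V) (k : ℕ) where
  red : Equiv.Perm V
  red_involutive : Involutive red
  red_ne : ∀ v, red v ≠ v
  color : V → Fin k
  color_black : ∀ v, color (β v) = color v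
  color_red : ∀ v, color (red v) = color v

abbrev OffPair (β : V → V) (a : V) : Type _ := {v : V // v ≠ a ∧ v ≠ β a}

section OffPair

variable {β : V → V}

lemma black_mem_offPair_iff (hβ : Involutive β) {a v : V} :
    (β v ≠ a ∧ β v ≠ β a) ↔ (v ≠ a ∧ v ≠ β a) := by
  rw [Ne, Ne, hβ.eq_iff, hβ.injective.eq_iff, and_comm]

def blackOff (hβ : Involutive β) (a : V) : OffPair β a → OffPair β a :=
  Subtype.map β fun _ => (black_mem_offPair_iff hβ).2

@[simp]
lemma blackOff_apply (hβ : Involutive β) {a : V} (v : OffPair β a) :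
    blackOff hβ a v = ⟨β v, (black_mem_offPair_iff hβ).2 v.2⟩ := rfl

lemma card_offPair [Finite V] {a : V} (ha : β a ≠ a) :
    Nat.card (OffPair β a) = Nat.card V - 2 := by
  have := Fintype.ofFinite V
  classical
  have hcompl : ({v | v ≠ a ∧ v ≠ β a} : Finset V) = {a, β a}ᶜ := by ext; simp
  rw [Nat.card_eq_fintype_card, Nat.card_eq_fintype_card, Fintype.card_subtype, hcompl,
    Finset.card_compl, Finset.card_pair ha.symm]

end OffPair

namespace ColoredMatching

variable {β : V → V} {k : ℕ}

instance [Finite V] : Finite (ColoredMatching β k) :=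
  Finite.of_injective (fun c => (c.red, c.color)) fun _ _ h =>
    ColoredMatching.ext (Prod.ext_iff.1 h).1 (Prod.ext_iff.1 h).2

def equivSigma (β : V → V) (k : ℕ) :
    ColoredMatching β k ≃
      Σ σ : {σ : Equiv.Perm V // (∀ v, σ (σ v) = v) ∧ ∀ v, σ v ≠ v},
        {f : V → Fin k // (∀ v, f (β v) = f v) ∧ ∀ v, f (σ.1 v) = f v} where
  toFun c := ⟨⟨c.red, c.red_involutive, c.red_ne⟩, ⟨c.color, c.color_black, c.color_red⟩⟩
  invFun p := ⟨p.1.1, p.1.2.1, p.1.2.2, p.2.1, p.2.2.1, p.2.2.2⟩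
  left_inv _ := rfl
  right_inv _ := rfl

def conj (c : ColoredMatching β k) (π : Equiv.Perm V) (hπ : ∀ v, c.color (π v) = c.color v) :
    ColoredMatching β k where
  red := π * c.red * π⁻¹
  red_involutive v := by simp [c.red_involutive _]
  red_ne v h := c.red_ne (π⁻¹ v) <| by
    rwa [Equiv.Perm.mul_apply, Equiv.Perm.mul_apply, ← π.eq_symm_apply] at h
  color := c.color
  color_black := c.color_black
  color_red v := by simpa [hπ, c.color_red] using (hπ (π⁻¹ v)).symm

@[simp]
lemma conj_red (c : ColoredMatching β k) (π : Equiv.Perm V) (hπ) :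
    (c.conj π hπ).red = π * c.red * π⁻¹ := rfl

@[simp]
lemma conj_color (c : ColoredMatching β k) (π : Equiv.Perm V) (hπ) :
    (c.conj π hπ).color = c.color := rfl

lemma conj_swap_red_apply_of_ne [DecidableEq V] (c : ColoredMatching β k) {x y a : V}
    (hx : a ≠ x) (hy : a ≠ y) (h) :
    (c.conj (Equiv.swap x y) h).red a = Equiv.swap x y (c.red a) := by
  simp [Equiv.swap_apply_of_ne_of_ne hx hy]

lemma conj_swap_conj_swap [DecidableEq V] (c : ColoredMatching β k) {x y y' : V} (hy : y = y')
    (h h') : (c.conj (Equiv.swap x y) h).conj (Equiv.swap x y') h' = c := by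
  subst hy
  ext v <;> simp

section Isolated

variable (hβ : Involutive β) (a : V)

def restrict (c : ColoredMatching β k) (h : c.red a = β a) :
    ColoredMatching (blackOff hβ a) k where
  red := c.red.subtypePerm fun v => by
    have h' : c.red (β a) = a := by rw [← h, c.red_involutive]
    rw [Ne, Ne, c.red.injective.eq_iff' h', c.red.injective.eq_iff' h, and_comm]
  red_involutive v := Subtype.ext (c.red_involutive v)
  red_ne v hv := c.red_ne v (congrArg Subtype.val hv)
  color v := c.color v
  color_black v := c.color_black v
  color_red v := c.color_red v

variable [DecidableEq V] {a}

def extend (ha : β a ≠ a) (col : Fin k) (c : ColoredMatching (blackOff hβ a) k) :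
    ColoredMatching β k where
  red := Involutive.toPerm (fun v => if hv : v ≠ a ∧ v ≠ β a then c.red ⟨v, hv⟩ else β v) <| by
    intro v
    by_cases hv : v ≠ a ∧ v ≠ β a
    · simp [hv, (c.red ⟨v, hv⟩).2, c.red_involutive ⟨v, hv⟩]
    · simp [hv, mt (black_mem_offPair_iff hβ).1 hv, hβ v]
  red_involutive := Involutive.toPerm_involutive _
  red_ne v := by
    by_cases hv : v ≠ a ∧ v ≠ β a
    · simpa [hv, Subtype.ext_iff] using c.red_ne ⟨v, hv⟩
    · obtain rfl | rfl : v = a ∨ v = β a := by tauto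
      · simpa using ha
      · simpa [hβ a] using ha.symm
  color v := if hv : v ≠ a ∧ v ≠ β a then c.color ⟨v, hv⟩ else col
  color_black v := by
    by_cases hv : v ≠ a ∧ v ≠ β a
    · simpa [hv, (black_mem_offPair_iff hβ).2 hv] using c.color_black ⟨v, hv⟩
    · simp [hv, mt (black_mem_offPair_iff hβ).1 hv]
  color_red v := by
    by_cases hv : v ≠ a ∧ v ≠ β a
    · simpa [hv, (c.red ⟨v, hv⟩).2] using c.color_red ⟨v, hv⟩
    · simp [hv, mt (black_mem_offPair_iff hβ).1 hv]

variable (ha : β a ≠ a) (col : Fin k) (c : ColoredMatching (blackOff hβ a) k)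

lemma extend_red_apply (v : V) :
    (extend hβ ha col c).red v = if hv : v ≠ a ∧ v ≠ β a then (c.red ⟨v, hv⟩ : V) else β v :=
  rfl

lemma extend_color_apply (v : V) :
    (extend hβ ha col c).color v = if hv : v ≠ a ∧ v ≠ β a then c.color ⟨v, hv⟩ else col :=
  rfl

lemma extend_red_self : (extend hβ ha col c).red a = β a := by
  simp [extend_red_apply]

lemma extend_color_self : (extend hβ ha col c).color a = col := by
  simp [extend_color_apply]

lemma restrict_extend : (extend hβ ha col c).restrict hβ a (extend_red_self hβ ha col c) = c := by
  ext v
  · simp [extend_red_apply, restrict, v.2]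
  · simp [extend_color_apply, restrict, v.2]

lemma extend_restrict (d : ColoredMatching β k) (hd : d.red a = β a) :
    extend hβ ha (d.color a) (d.restrict hβ a hd) = d := by
  have hd' : d.red (β a) = a := by rw [← hd, d.red_involutive]
  ext v
  · by_cases hv : v ≠ a ∧ v ≠ β a
    · simp [extend_red_apply, hv, restrict]
    · rcases not_and_or.1 hv with hv | hv <;> simp_all [extend_red_apply, hβ a]
  · by_cases hv : v ≠ a ∧ v ≠ β a
    · simp [extend_color_apply, hv, restrict]
    · rcases not_and_or.1 hv with hv | hv <;> simp_all [extend_color_apply, d.color_black]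

def isolatedEquiv :
    {c : ColoredMatching β k // c.red a = β a} ≃ Fin k × ColoredMatching (blackOff hβ a) k where
  toFun c := (c.1.color a, c.1.restrict hβ a c.2)
  invFun p := ⟨extend hβ ha p.1 p.2, extend_red_self hβ ha p.1 p.2⟩
  left_inv c := Subtype.ext (extend_restrict hβ ha c.1 c.2)
  right_inv p := Prod.ext (extend_color_self hβ ha p.1 p.2) (restrict_extend hβ ha p.1 p.2)

end Isolated

section Splice

variable [DecidableEq V] (hβ : Involutive β) {a : V} (ha : β a ≠ a)

def splice (c : ColoredMatching β k) (hc : c.red a ≠ β a) :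
    OffPair β a × ColoredMatching (blackOff hβ a) k :=
  have hcol : ∀ v, c.color (Equiv.swap (β a) (c.red a) v) = c.color v :=
    apply_swap_eq_of_apply_eq (by rw [c.color_black, c.color_red])
  (⟨c.red a, c.red_ne a, hc⟩, (c.conj _ hcol).restrict hβ a <| by
    rw [conj_swap_red_apply_of_ne _ ha.symm (c.red_ne a).symm, Equiv.swap_apply_right])

def unsplice (m : OffPair β a) (c : ColoredMatching (blackOff hβ a) k) : ColoredMatching β k :=
  (extend hβ ha (c.color m) c).conj (Equiv.swap (β a) m) <|
    apply_swap_eq_of_apply_eq (by simp [extend_color_apply, m.2])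

lemma unsplice_red_self (m : OffPair β a) (c : ColoredMatching (blackOff hβ a) k) :
    (unsplice hβ ha m c).red a = m := by
  rw [unsplice, conj_swap_red_apply_of_ne _ ha.symm m.2.1.symm, extend_red_self,
    Equiv.swap_apply_left]

lemma unsplice_splice (c : ColoredMatching β k) (hc : c.red a ≠ β a) :
    unsplice hβ ha (splice hβ ha c hc).1 (splice hβ ha c hc).2 = c := by
  have hcol : ∀ v, c.color (Equiv.swap (β a) (c.red a) v) = c.color v :=
    apply_swap_eq_of_apply_eq (by rw [c.color_black, c.color_red])
  set d := c.conj _ hcol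
  have hd : d.red a = β a := by
    rw [conj_swap_red_apply_of_ne _ ha.symm (c.red_ne a).symm, Equiv.swap_apply_right]
  have hm : (d.restrict hβ a hd).color ⟨c.red a, c.red_ne a, hc⟩ = d.color a := c.color_red a
  have hext : extend hβ ha ((d.restrict hβ a hd).color ⟨c.red a, c.red_ne a, hc⟩)
      (d.restrict hβ a hd) = d := by
    rw [hm, extend_restrict]
  simp only [unsplice, splice, hext, d, conj_swap_conj_swap _ rfl]

lemma splice_unsplice (m : OffPair β a) (c : ColoredMatching (blackOff hβ a) k) :
    splice hβ ha (unsplice hβ ha m c) ((unsplice_red_self hβ ha m c).trans_ne m.2.2) = (m, c) := by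
  refine Prod.ext (Subtype.ext (unsplice_red_self hβ ha m c)) ?_
  have hconj : ∀ h, (unsplice hβ ha m c).conj
      (Equiv.swap (β a) ((unsplice hβ ha m c).red a)) h = extend hβ ha (c.color m) c :=
    conj_swap_conj_swap _ (unsplice_red_self hβ ha m c).symm _
  simp only [splice, hconj, restrict_extend]

def spliceEquiv :
    {c : ColoredMatching β k // c.red a ≠ β a} ≃
      OffPair β a × ColoredMatching (blackOff hβ a) k where
  toFun c := splice hβ ha c.1 c.2
  invFun p := ⟨unsplice hβ ha p.1 p.2, (unsplice_red_self hβ ha p.1 p.2).trans_ne p.1.2.2⟩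
  left_inv c := Subtype.ext (unsplice_splice hβ ha c.1 c.2)
  right_inv p := splice_unsplice hβ ha p.1 p.2

end Splice

theorem card_eq_mul_card_blackOff [Finite V] [DecidableEq V] (hβ : Involutive β) {a : V}
    (ha : β a ≠ a) :
    Nat.card (ColoredMatching β k) =
      (k + Nat.card (OffPair β a)) * Nat.card (ColoredMatching (blackOff hβ a) k) := by
  rw [← Nat.card_congr (Equiv.sumCompl fun c : ColoredMatching β k => c.red a = β a),
    Nat.card_sum, Nat.card_congr (isolatedEquiv hβ ha), Nat.card_congr (spliceEquiv hβ ha),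
    Nat.card_prod, Nat.card_prod, Nat.card_fin, add_mul]

theorem card_eq_prod (k n : ℕ) {V : Type*} [Finite V] [DecidableEq V] {β : V → V}
    (hβ : Involutive β) (hβne : ∀ v, β v ≠ v) (hV : Nat.card V = 2 * n) :
    Nat.card (ColoredMatching β k) = ∏ j ∈ range n, (k + 2 * j) := by
  induction n generalizing V with
  | zero =>
    have : IsEmpty V := Finite.card_eq_zero_iff.1 hV
    rw [prod_range_zero, Nat.card_eq_one_iff_unique]
    exact ⟨⟨fun c d => ColoredMatching.ext (Subsingleton.elim _ _) (Subsingleton.elim _ _)⟩,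
      ⟨⟨1, fun _ => rfl, isEmptyElim, isEmptyElim, isEmptyElim, isEmptyElim⟩⟩⟩
  | succ n ih =>
    obtain ⟨a⟩ : Nonempty V := Finite.card_pos_iff.1 (by omega)
    have hoff : Nat.card (OffPair β a) = 2 * n := by rw [card_offPair (hβne a), hV]; omega
    rw [card_eq_mul_card_blackOff hβ (hβne a), hoff,
      ih (fun v => Subtype.ext (hβ v)) (fun v h => hβne v (congrArg Subtype.val h)) hoff,
      prod_range_succ, mul_comm]

end ColoredMatching

lemma blackPartner_involutive (n : ℕ) : Involutive (blackPartner n) := by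
  intro v
  ext
  simp only [blackPartner]
  split_ifs <;> omega

lemma blackPartner_ne (n : ℕ) (v : Fin (2 * n)) : blackPartner n v ≠ v := by
  rw [Ne, Fin.ext_iff]
  simp only [blackPartner]
  split_ifs <;> omega

lemma gFun_eq_card (k n : ℕ) : gFun k n = Nat.card (ColoredMatching (blackPartner n) k) := by
  rw [Nat.card_congr (ColoredMatching.equivSigma _ k), Nat.card_sigma, gFun,
    ← sum_subtype_eq_sum_filter, subtype_univ]
  refine sum_congr rfl fun σ _ => ?_
  rw [← Nat.card_fin k, ← SimpleGraph.card_forall_adj_imp_eq, Nat.card_fin, matchingGraph]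
  simp only [SimpleGraph.forall_fromRel_adj_imp_iff, or_imp, forall_and, forall_eq']
  simp only [eq_comm]

theorem gFun_eq_prod (k n : ℕ) : gFun k n = ∏ j ∈ range n, (k + 2 * j) := by
  rw [gFun_eq_card, ColoredMatching.card_eq_prod k n (blackPartner_involutive n)
    (blackPartner_ne n) (Nat.card_fin _)]

theorem stmt15 (k n : ℕ) :
    gFun k 0 = 1 ∧
    (0 < n → gFun k n = (k + 2 * (n - 1)) * gFun k (n - 1)) ∧
    gFun k n = ∏ j ∈ range n, (k + 2 * j) := by
  refine ⟨by simp [gFun_eq_prod], fun hn => ?_, gFun_eq_prod k n⟩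
  obtain ⟨m, rfl⟩ : ∃ m, n = m + 1 := ⟨n - 1, by omega⟩
  rw [gFun_eq_prod, gFun_eq_prod, Nat.add_sub_cancel, prod_range_succ, mul_comm]
end
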